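/- arXiv:1204.4204 — 10 statements merged into one kernel-verified Lean document; each statement's English description precedes it below -/
import Mathlib

section
/- Let n ≥ 2, ℓ ≥ 2 be integers, G = ℤ_{ℓⁿ−(ℓ−1)ⁿ}, and α = ℓ·(ℓ−1)⁻¹ ∈ G. Then the map E ↦ Σᵢ εᵢ·α^{i−1} is injective on the discrete chair S_{L,K} with L=(ℓ,...,ℓ), K=(ℓ−1,...,ℓ−1), and its image is all of G. -/
open Finset

/-- Key uniqueness lemma for the mixed `ℓ`/`(ℓ-1)`-ary digit representation:
if `∑ cᵢ ℓ^i (ℓ-1)^(n-1-i) = u ℓ^n - v (ℓ-1)^n` with digits `|cᵢ| ≤ ℓ-1` and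
`0 ≤ v ≤ ℓ-1`, then `u ≤ v`, and if `u = v` then all digits equal `v`. -/
lemma chair_keyQ (ℓ : ℕ) (hℓ : 2 ≤ ℓ) (n : ℕ) : ∀ (c : ℕ → ℤ) (u v : ℤ),
    (∀ i, |c i| ≤ (ℓ:ℤ) - 1) → 0 ≤ v → v ≤ (ℓ:ℤ) - 1 →
    (∑ i ∈ range n, c i * (ℓ:ℤ)^i * ((ℓ:ℤ)-1)^(n-1-i)) = u * (ℓ:ℤ)^n - v * ((ℓ:ℤ)-1)^n →
    u ≤ v ∧ (u = v → ∀ i < n, c i = v) := by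
  have hL : (0:ℤ) < (ℓ:ℤ) := by exact_mod_cast (by omega : 0 < ℓ)
  induction n with
  | zero =>
    intro c u v hc hv0 hv1 heq
    simp only [range_zero, sum_empty, pow_zero, mul_one] at heq
    have huv : u = v := by linarith
    exact ⟨le_of_eq huv, fun _ i hi => absurd hi (by omega)⟩
  | succ n ih =>
    intro c u v hc hv0 hv1 heq
    rw [Finset.sum_range_succ'] at heq
    have hexp : ∀ i ∈ range n, c (i+1) * (ℓ:ℤ)^(i+1) * ((ℓ:ℤ)-1)^(n + 1 - 1 - (i+1))
        = (ℓ:ℤ) * (c (i+1) * (ℓ:ℤ)^i * ((ℓ:ℤ)-1)^(n-1-i)) := by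
      intro i hi
      have h1 : n + 1 - 1 - (i+1) = n - 1 - i := by omega
      rw [h1]; ring
    rw [Finset.sum_congr rfl hexp, ← Finset.mul_sum] at heq
    set S' := ∑ i ∈ range n, c (i+1) * (ℓ:ℤ)^i * ((ℓ:ℤ)-1)^(n-1-i) with hS'
    simp only [pow_zero, mul_one, Nat.add_sub_cancel, Nat.sub_zero] at heq
    have hdvd : (ℓ:ℤ) ∣ (c 0 - v) := by
      have h1 : (c 0 + v * ((ℓ:ℤ)-1)) * ((ℓ:ℤ)-1)^n = (ℓ:ℤ) * (u * (ℓ:ℤ)^n - S') := by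
        linear_combination heq
      have hcop : IsCoprime (ℓ:ℤ) ((ℓ:ℤ)-1) := ⟨1, -1, by ring⟩
      have h2 : (ℓ:ℤ) ∣ (c 0 + v * ((ℓ:ℤ)-1)) * ((ℓ:ℤ)-1)^n := ⟨_, h1⟩
      have h3 : (ℓ:ℤ) ∣ (c 0 + v * ((ℓ:ℤ)-1)) := (hcop.pow_right).dvd_of_dvd_mul_right h2
      have h4 : c 0 - v = (c 0 + v * ((ℓ:ℤ)-1)) - v * (ℓ:ℤ) := by ring
      rw [h4]
      exact dvd_sub h3 (Dvd.intro_left v rfl)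
    obtain ⟨t, ht⟩ := hdvd
    have hc0 := abs_le.mp (hc 0)
    have ht' : t = 0 ∨ t = -1 := by
      have h1 : t < 1 := by nlinarith [ht, hc0.2]
      have h2 : (-2:ℤ) < t := by nlinarith [ht, hc0.1]
      omega
    have hℓ0 : (ℓ:ℤ) ≠ 0 := hL.ne'
    rcases ht' with rfl | rfl
    · have hc0v : c 0 = v := by linarith [ht]
      have hS : S' = u * (ℓ:ℤ)^n - v * ((ℓ:ℤ)-1)^n := by
        apply mul_left_cancel₀ hℓ0
        have hp1 : (ℓ:ℤ)^(n+1) = (ℓ:ℤ)^n * ℓ := pow_succ _ _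
        have hp2 : ((ℓ:ℤ)-1)^(n+1) = ((ℓ:ℤ)-1)^n * ((ℓ:ℤ)-1) := pow_succ _ _
        linear_combination heq - ((ℓ:ℤ)-1)^n * hc0v - u * hp1 + v * hp2
      obtain ⟨hle, hcst⟩ := ih (fun i => c (i+1)) u v (fun i => hc (i+1)) hv0 hv1 hS
      refine ⟨hle, fun huv i hi => ?_⟩
      cases i with
      | zero => exact hc0v
      | succ j => exact hcst huv j (by omega)
    · have hc0v : c 0 = v - ℓ := by linarith [ht]
      have hv1' : 1 ≤ v := by linarith [hc0.1]
      have hS : S' = u * (ℓ:ℤ)^n - (v-1) * ((ℓ:ℤ)-1)^n := by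
        apply mul_left_cancel₀ hℓ0
        have hp1 : (ℓ:ℤ)^(n+1) = (ℓ:ℤ)^n * ℓ := pow_succ _ _
        have hp2 : ((ℓ:ℤ)-1)^(n+1) = ((ℓ:ℤ)-1)^n * ((ℓ:ℤ)-1) := pow_succ _ _
        linear_combination heq - ((ℓ:ℤ)-1)^n * hc0v - u * hp1 + v * hp2
      obtain ⟨hle, _⟩ := ih (fun i => c (i+1)) u (v-1) (fun i => hc (i+1)) (by linarith)
        (by linarith) hS
      exact ⟨by linarith, fun huv => absurd huv (by omega)⟩

/-- If `∑ cᵢ ℓ^i (ℓ-1)^(n-1-i) = k (ℓ^n - (ℓ-1)^n)` with `|cᵢ| ≤ ℓ-1` and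
`|k| ≤ ℓ-1`, then all `cᵢ = k`. -/
lemma chair_keyQ' (ℓ : ℕ) (hℓ : 2 ≤ ℓ) (n : ℕ) (c : ℕ → ℤ) (k : ℤ)
    (hc : ∀ i, |c i| ≤ (ℓ:ℤ) - 1) (hk : |k| ≤ (ℓ:ℤ) - 1)
    (heq : (∑ i ∈ range n, c i * (ℓ:ℤ)^i * ((ℓ:ℤ)-1)^(n-1-i))
      = k * ((ℓ:ℤ)^n - ((ℓ:ℤ)-1)^n)) : ∀ i < n, c i = k := by
  intro i hi
  rcases le_or_gt 0 k with hk0 | hk0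
  · have h := chair_keyQ ℓ hℓ n c k k hc hk0 (by rwa [abs_of_nonneg hk0] at hk)
      (by linear_combination heq)
    exact h.2 rfl i hi
  · have hneg : (∑ i ∈ range n, (-(c i)) * (ℓ:ℤ)^i * ((ℓ:ℤ)-1)^(n-1-i))
        = (-k) * (ℓ:ℤ)^n - (-k)*((ℓ:ℤ)-1)^n := by
      simp only [neg_mul]
      rw [Finset.sum_neg_distrib]
      linear_combination -heq
    have h := chair_keyQ ℓ hℓ n (fun i => -(c i)) (-k) (-k)
      (fun i => by rw [abs_neg]; exact hc i) (by linarith)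
      (by rw [← abs_of_neg hk0]; exact hk) hneg
    have h2 := h.2 rfl i hi
    simp only [neg_inj] at h2
    exact h2

/-- With `G = ℤ/(ℓⁿ−(ℓ−1)ⁿ)ℤ` and `α = ℓ·(ℓ−1)⁻¹`, the map
`E ↦ Σᵢ εᵢ·α^(i−1)` is a bijection from the discrete chair
(vectors with `0 ≤ εᵢ ≤ ℓ−1` and some `εⱼ = 0`) onto `G`. -/
theorem chair_splitting (n ℓ : ℕ) (hn : 2 ≤ n) (hℓ : 2 ≤ ℓ) :
    Set.BijOn
      (fun ε : Fin n → ℕ =>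
        ∑ i, (ε i : ZMod (ℓ ^ n - (ℓ - 1) ^ n)) *
          ((ℓ : ZMod (ℓ ^ n - (ℓ - 1) ^ n)) *
            Ring.inverse ((ℓ : ZMod (ℓ ^ n - (ℓ - 1) ^ n)) - 1)) ^ (i : ℕ))
      {ε : Fin n → ℕ | (∀ i, ε i ≤ ℓ - 1) ∧ ∃ j, ε j = 0}
      Set.univ := by
  classical
  set m := ℓ ^ n - (ℓ - 1) ^ n with hm_def
  set F := (fun ε : Fin n → ℕ =>
      ∑ i, (ε i : ZMod m) * ((ℓ : ZMod m) * Ring.inverse ((ℓ : ZMod m) - 1)) ^ (i : ℕ))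
    with hF_def
  have hmlt : (ℓ-1)^n < ℓ^n := Nat.pow_lt_pow_left (by omega) (by omega)
  have hm : 0 < m := by omega
  have hmeq : (ℓ-1)^n + m = ℓ^n := by omega
  haveI : NeZero m := ⟨hm.ne'⟩
  -- `ℓ - 1` is a unit mod `m`
  have hcop : Nat.Coprime (ℓ - 1) m := by
    have h1 : (ℓ - 1) ∣ ℓ ^ n - 1 ^ n := Nat.sub_dvd_pow_sub_pow ℓ 1 n
    rw [one_pow] at h1
    have hd1 : Nat.gcd (ℓ-1) m ∣ ℓ ^ n - 1 := (Nat.gcd_dvd_left _ _).trans h1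
    have hd2 : Nat.gcd (ℓ-1) m ∣ ℓ ^ n := by
      have h2 : Nat.gcd (ℓ-1) m ∣ (ℓ-1)^n + m :=
        Dvd.dvd.add ((Nat.gcd_dvd_left _ _).trans (dvd_pow_self _ (by omega)))
          (Nat.gcd_dvd_right _ _)
      rwa [hmeq] at h2
    have h3 : Nat.gcd (ℓ-1) m ∣ 1 := by
      have h4 := Nat.dvd_sub hd2 hd1
      rwa [Nat.sub_sub_self (Nat.one_le_pow _ _ (by omega))] at h4
    exact Nat.dvd_one.mp h3
  set x : ZMod m := ((ℓ - 1 : ℕ) : ZMod m) with hx_def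
  have hx : IsUnit x := (ZMod.isUnit_iff_coprime _ m).mpr hcop
  have hcast : ((ℓ : ZMod m) - 1) = x := by
    rw [hx_def, Nat.cast_sub (by omega : 1 ≤ ℓ), Nat.cast_one]
  -- the natural-number weighted sum
  set S : (Fin n → ℕ) → ℕ :=
    (fun ε => ∑ i : Fin n, ε i * ℓ^(i:ℕ) * (ℓ-1)^(n-1-(i:ℕ))) with hS_def
  -- key: multiplying F by x^(n-1) clears denominators
  have hkeypow : ∀ i : ℕ, i < n → (Ring.inverse x)^i * x^(n-1) = x^(n-1-i) := by
    intro i hi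
    have hsplit : x^(n-1) = x^i * x^(n-1-i) := by rw [← pow_add]; congr 1; omega
    have h1 : Ring.inverse x ^ i * x ^ i = 1 := by
      rw [← mul_pow, Ring.inverse_mul_cancel _ hx, one_pow]
    rw [hsplit, ← mul_assoc, h1, one_mul]
  have hmulx : ∀ ε : Fin n → ℕ, F ε * x^(n-1) = (S ε : ZMod m) := by
    intro ε
    rw [hF_def, hS_def]
    simp only
    rw [Finset.sum_mul, Nat.cast_sum]
    refine Finset.sum_congr rfl fun i _ => ?_
    rw [Nat.cast_mul, Nat.cast_mul, Nat.cast_pow, Nat.cast_pow, hcast, mul_pow]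
    calc (ε i : ZMod m) * ((ℓ:ZMod m)^(i:ℕ) * (Ring.inverse x)^(i:ℕ)) * x^(n-1)
        = (ε i : ZMod m) * (ℓ:ZMod m)^(i:ℕ) * ((Ring.inverse x)^(i:ℕ) * x^(n-1)) := by ring
      _ = (ε i : ZMod m) * (ℓ:ZMod m)^(i:ℕ) * x^(n-1-(i:ℕ)) := by rw [hkeypow _ i.isLt]
  -- integer version of S
  have hSZ : ∀ δ : Fin n → ℕ, ((S δ : ℕ) : ℤ)
      = ∑ i : Fin n, (δ i : ℤ) * (ℓ:ℤ)^(i:ℕ) * ((ℓ:ℤ)-1)^(n-1-(i:ℕ)) := by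
    intro δ
    rw [hS_def]
    push_cast [Nat.cast_sub (show 1 ≤ ℓ by omega)]
    rfl
  -- geometric sum identity
  have hG : (∑ i ∈ range n, (ℓ:ℤ)^i * ((ℓ:ℤ)-1)^(n-1-i)) = (ℓ:ℤ)^n - ((ℓ:ℤ)-1)^n := by
    have h := geom_sum₂_mul (ℓ:ℤ) ((ℓ:ℤ)-1) n
    simpa using h
  have hmZ : ((m:ℕ):ℤ) = (ℓ:ℤ)^n - ((ℓ:ℤ)-1)^n := by
    rw [hm_def, Nat.cast_sub hmlt.le, Nat.cast_pow, Nat.cast_pow,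
      Nat.cast_sub (by omega : 1 ≤ ℓ), Nat.cast_one]
  have hL1 : (1:ℤ) ≤ (ℓ:ℤ) - 1 := by
    have : (2:ℤ) ≤ (ℓ:ℤ) := by exact_mod_cast hℓ
    linarith
  -- injectivity
  have hInj : Set.InjOn F {ε : Fin n → ℕ | (∀ i, ε i ≤ ℓ - 1) ∧ ∃ j, ε j = 0} := by
    intro ε hε ε' hε' heq
    have h1 : (S ε : ZMod m) = (S ε' : ZMod m) := by rw [← hmulx ε, ← hmulx ε', heq]
    have h2 : S ε ≡ S ε' [MOD m] := (ZMod.natCast_eq_natCast_iff _ _ _).mp h1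
    obtain ⟨k, hk⟩ := (Nat.modEq_iff_dvd).mp h2
    set c : ℕ → ℤ := fun i => if h : i < n then ((ε ⟨i,h⟩ : ℤ) - (ε' ⟨i,h⟩ : ℤ)) else 0
      with hc_def
    have hcval : ∀ i : Fin n, c (i:ℕ) = (ε i : ℤ) - (ε' i : ℤ) := by
      intro i
      rw [hc_def]
      simp only [i.isLt, dif_pos, Fin.eta]
    have hsum_c : (∑ i ∈ range n, c i * (ℓ:ℤ)^i * ((ℓ:ℤ)-1)^(n-1-i))
        = ((S ε : ℤ) - (S ε' : ℤ)) := by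
      rw [Finset.sum_range (fun i => c i * (ℓ:ℤ)^i * ((ℓ:ℤ)-1)^(n-1-i)),
        hSZ, hSZ, ← Finset.sum_sub_distrib]
      refine Finset.sum_congr rfl fun i _ => ?_
      rw [hcval i]; ring
    have hc : ∀ i, |c i| ≤ (ℓ:ℤ) - 1 := by
      intro i
      by_cases h : i < n
      · simp only [hc_def]
        rw [dif_pos h, abs_le]
        have h1 := hε.1 ⟨i,h⟩
        have h2 := hε'.1 ⟨i,h⟩
        omega
      · simp only [hc_def]
        rw [dif_neg h, abs_zero]; linarith
    have heqQ : (∑ i ∈ range n, c i * (ℓ:ℤ)^i * ((ℓ:ℤ)-1)^(n-1-i))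
        = (-k) * ((ℓ:ℤ)^n - ((ℓ:ℤ)-1)^n) := by
      rw [hsum_c, ← hmZ]
      linear_combination -hk
    -- bound on k
    have habs : |(∑ i ∈ range n, c i * (ℓ:ℤ)^i * ((ℓ:ℤ)-1)^(n-1-i))|
        ≤ ((ℓ:ℤ)-1) * ((ℓ:ℤ)^n - ((ℓ:ℤ)-1)^n) := by
      calc |(∑ i ∈ range n, c i * (ℓ:ℤ)^i * ((ℓ:ℤ)-1)^(n-1-i))|
          ≤ ∑ i ∈ range n, |c i * (ℓ:ℤ)^i * ((ℓ:ℤ)-1)^(n-1-i)| :=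
            Finset.abs_sum_le_sum_abs _ _
        _ ≤ ∑ i ∈ range n, ((ℓ:ℤ)-1) * ((ℓ:ℤ)^i * ((ℓ:ℤ)-1)^(n-1-i)) := by
            refine Finset.sum_le_sum fun i _ => ?_
            have hw : (0:ℤ) ≤ (ℓ:ℤ)^i * ((ℓ:ℤ)-1)^(n-1-i) :=
              mul_nonneg (pow_nonneg (by positivity) _) (pow_nonneg (by linarith) _)
            have h := mul_le_mul_of_nonneg_right (hc i) hw
            calc |c i * (ℓ:ℤ)^i * ((ℓ:ℤ)-1)^(n-1-i)|
                = |c i| * ((ℓ:ℤ)^i * ((ℓ:ℤ)-1)^(n-1-i)) := by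
                  rw [abs_mul, abs_mul, abs_pow, abs_pow, abs_of_nonneg (by positivity : (0:ℤ) ≤ (ℓ:ℤ)),
                    abs_of_nonneg (by linarith : (0:ℤ) ≤ (ℓ:ℤ)-1)]
                  ring
              _ ≤ _ := h
        _ = ((ℓ:ℤ)-1) * (∑ i ∈ range n, (ℓ:ℤ)^i * ((ℓ:ℤ)-1)^(n-1-i)) := by
            rw [Finset.mul_sum]
        _ = _ := by rw [hG]
    have hm'pos : (0:ℤ) < (ℓ:ℤ)^n - ((ℓ:ℤ)-1)^n := by
      rw [← hmZ]; exact_mod_cast hm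
    have hkabs : |(-k)| ≤ (ℓ:ℤ)-1 := by
      rw [heqQ, abs_mul, abs_of_pos hm'pos] at habs
      exact le_of_mul_le_mul_right habs hm'pos
    have hconst := chair_keyQ' ℓ hℓ n c (-k) hc hkabs heqQ
    obtain ⟨j, hj⟩ := hε.2
    obtain ⟨j', hj'⟩ := hε'.2
    have hcj : c (j:ℕ) = -k := hconst _ j.isLt
    have hcj' : c (j':ℕ) = -k := hconst _ j'.isLt
    rw [hcval j, hj] at hcj
    rw [hcval j', hj'] at hcj'
    have hk0 : k = 0 := by
      have h1 : (0:ℤ) ≤ (ε' j : ℤ) := by positivity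
      have h2 : (0:ℤ) ≤ (ε j' : ℤ) := by positivity
      push_cast at hcj hcj'
      omega
    funext i
    have := hconst (i:ℕ) i.isLt
    rw [hcval i, hk0] at this
    have : (ε i : ℤ) = (ε' i : ℤ) := by omega
    exact_mod_cast this
  -- counting
  set P := Fintype.piFinset fun _ : Fin n => Finset.range ℓ with hP_def
  set B := Fintype.piFinset fun _ : Fin n => Finset.Ico 1 ℓ with hB_def
  set A := P.filter fun ε => ∃ j, ε j = 0 with hA_def
  have hAmem : ∀ ε : Fin n → ℕ, ε ∈ A ↔ ((∀ i, ε i ≤ ℓ - 1) ∧ ∃ j, ε j = 0) := by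
    intro ε
    rw [hA_def, Finset.mem_filter, hP_def, Fintype.mem_piFinset]
    simp only [Finset.mem_range]
    constructor
    · rintro ⟨h1, h2⟩; exact ⟨fun i => by have := h1 i; omega, h2⟩
    · rintro ⟨h1, h2⟩; exact ⟨fun i => by have := h1 i; omega, h2⟩
  have hBP : B ⊆ P := by
    intro ε h
    rw [hB_def, Fintype.mem_piFinset] at h
    rw [hP_def, Fintype.mem_piFinset]
    intro i
    have := h i
    rw [Finset.mem_Ico] at this
    exact Finset.mem_range.mpr this.2
  have hA : A = P \ B := by
    ext ε
    rw [hA_def, Finset.mem_filter, Finset.mem_sdiff, hP_def, hB_def,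
      Fintype.mem_piFinset, Fintype.mem_piFinset]
    simp only [Finset.mem_range, Finset.mem_Ico, Fintype.mem_piFinset]
    constructor
    · rintro ⟨h1, j, hj⟩
      exact ⟨h1, fun hall => by have := (hall j).1; omega⟩
    · rintro ⟨h1, h2⟩
      refine ⟨h1, ?_⟩
      push_neg at h2
      obtain ⟨i, hi⟩ := h2
      exact ⟨i, by have := h1 i; omega⟩
  have hcardP : P.card = ℓ^n := by
    rw [hP_def, Fintype.card_piFinset]
    simp
  have hcardB : B.card = (ℓ-1)^n := by
    rw [hB_def, Fintype.card_piFinset]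
    simp
  have hcardA : A.card = m := by
    rw [hA, Finset.card_sdiff_of_subset hBP, hcardP, hcardB]
  have himg : A.image F = Finset.univ := by
    apply Finset.eq_univ_of_card
    rw [Finset.card_image_of_injOn, hcardA, ZMod.card m]
    intro a ha b hb hab
    exact hInj ((hAmem a).mp (Finset.mem_coe.mp ha)) ((hAmem b).mp (Finset.mem_coe.mp hb)) hab
  refine ⟨fun _ _ => Set.mem_univ _, hInj, ?_⟩
  intro b _
  have hb : b ∈ A.image F := himg ▸ Finset.mem_univ b
  obtain ⟨a, haA, hfa⟩ := Finset.mem_image.mp hb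
  exact ⟨a, (hAmem a).mp haA, hfa⟩
end

section
/- A lattice tiling of ℤⁿ with a finite shape S ⊆ ℤⁿ exists if and only if there exists an Abelian group G of order |S| such that S splits G (i.e., the map E ↦ Σ εᵢβᵢ is injective on S for some sequence β₁,...,βₙ ∈ G). -/
/-- A lattice tiling of `ℤⁿ` with a finite shape `S` exists if and only if there is
an Abelian group `G` of order `|S|` such that `S` splits `G`. -/
theorem lattice_tiling_iff_splitting (n : ℕ) (S : Set (Fin n → ℤ))
    (hS : S.Finite) (hne : S.Nonempty) :
    (∃ Λ : AddSubgroup (Fin n → ℤ),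
        ∀ Z : Fin n → ℤ, ∃! X : Fin n → ℤ, X ∈ Λ ∧ Z - X ∈ S) ↔
      ∃ (G : Type) (_ : AddCommGroup G),
        Nat.card G = S.ncard ∧
          ∃ β : Fin n → G,
            Set.InjOn (fun E : Fin n → ℤ => ∑ i, E i • β i) S := by
  constructor
  · rintro ⟨Λ, hΛ⟩
    have key : ∀ E : Fin n → ℤ,
        (∑ i, E i • (QuotientAddGroup.mk (Pi.single i 1) : (Fin n → ℤ) ⧸ Λ))
          = QuotientAddGroup.mk E := by
      intro E
      have h1 : ∀ i, E i • (QuotientAddGroup.mk (Pi.single i 1) : (Fin n → ℤ) ⧸ Λ)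
          = QuotientAddGroup.mk' Λ (E i • Pi.single i 1) := by
        intro i; rw [map_zsmul]; rfl
      simp_rw [h1, ← map_sum]
      have h2 : (∑ i, E i • Pi.single i (1 : ℤ)) = E := by
        funext j
        simp [Finset.sum_apply, Pi.single_apply, mul_ite]
      rw [h2]; rfl
    have hinj : ∀ E ∈ S, ∀ E' ∈ S,
        (QuotientAddGroup.mk E : (Fin n → ℤ) ⧸ Λ) = QuotientAddGroup.mk E' → E = E' := by
      intro E hE E' hE' h
      rw [QuotientAddGroup.eq_iff_sub_mem] at h
      obtain ⟨X, hX, huniq⟩ := hΛ E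
      have h0 : (0 : Fin n → ℤ) = X := huniq 0 ⟨Λ.zero_mem, by simpa using hE⟩
      have h1 : E - E' = X := huniq (E - E') ⟨h, by simpa using hE'⟩
      have : E - E' = 0 := h1.trans h0.symm
      linear_combination (norm := abel) this
    refine ⟨(Fin n → ℤ) ⧸ Λ, inferInstance, ?_, fun i => QuotientAddGroup.mk (Pi.single i 1), ?_⟩
    · have hsurj : ∀ q : (Fin n → ℤ) ⧸ Λ, ∃ E ∈ S, QuotientAddGroup.mk E = q := by
        intro q
        obtain ⟨Z, rfl⟩ := QuotientAddGroup.mk_surjective q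
        obtain ⟨X, ⟨hX, hZX⟩, -⟩ := hΛ Z
        exact ⟨Z - X, hZX, by rw [QuotientAddGroup.eq_iff_sub_mem]; simpa using Λ.neg_mem hX⟩
      have : Function.Bijective (fun s : S => (QuotientAddGroup.mk s : (Fin n → ℤ) ⧸ Λ)) := by
        constructor
        · intro a b hab
          exact Subtype.ext (hinj a a.2 b b.2 hab)
        · intro q
          obtain ⟨E, hE, hq⟩ := hsurj q
          exact ⟨⟨E, hE⟩, hq⟩
      rw [← Nat.card_eq_of_bijective _ this, Nat.card_coe_set_eq]
    · intro E hE E' hE' h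
      simp only [key] at h
      exact hinj E hE E' hE' h
  · rintro ⟨G, _, hcard, β, hinj⟩
    have hScard : 0 < S.ncard := (Set.ncard_pos hS).mpr hne
    haveI : Finite G := Nat.finite_of_card_ne_zero (by omega)
    let φ : (Fin n → ℤ) →+ G := AddMonoidHom.mk' (fun E => ∑ i, E i • β i)
      (by intro a b; simp [add_smul, Finset.sum_add_distrib])
    haveI : Fintype S := hS.fintype
    have hbij : Function.Bijective (fun s : S => φ s) := by
      rw [Nat.bijective_iff_injective_and_card]
      constructor
      · intro a b hab
        exact Subtype.ext (hinj a.2 b.2 hab)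
      · rw [Nat.card_coe_set_eq, hcard]
    refine ⟨φ.ker, fun Z => ?_⟩
    obtain ⟨⟨s, hs⟩, hφs0⟩ := hbij.2 (φ Z)
    have hφs : φ s = φ Z := hφs0
    refine ⟨Z - s, ⟨?_, by simpa using hs⟩, ?_⟩
    · rw [AddMonoidHom.mem_ker, map_sub, hφs, sub_self]
    · rintro Y ⟨hY, hZY⟩
      rw [AddMonoidHom.mem_ker] at hY
      have h1 : φ (Z - Y) = φ s := by rw [map_sub, hY, sub_zero, hφs]
      have h2 : Z - Y = s := hinj hZY hs h1
      linear_combination (norm := abel) -h2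
end

section
/- Let L=(ℓ₁,...,ℓₙ), K=(k₁,...,kₙ) ∈ ℤⁿ with 0 < kᵢ < ℓᵢ, τ = ∏ℓᵢ, κ = ∏kᵢ, and G = ℤ_{τ−κ}, and suppose each kᵢ for 2 ≤ i ≤ n is a unit in G. Define β₁ = 1 and β_{i+1} = k_{i+1}⁻¹ ℓᵢ βᵢ for 1 ≤ i ≤ n−1. Then the map E ↦ Σᵢ εᵢβᵢ is a bijection from the discrete chair S_{L,K} onto G. -/
/-!
For a character `ψ` of `ℤ_m` (`m = τ - κ`) put `zᵢ = ψ βᵢ`. The recursion gives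
`ℓᵢ βᵢ = kᵢ₊₁ βᵢ₊₁`, and since `τ ≡ κ (mod m)` and the `kᵢ` (`i ≥ 2`) are units this closes up
cyclically: `ℓₙ βₙ = k₁ β₁`. Hence `∑ (ℓᵢ - kᵢ) βᵢ = 0`, and as the chair is the `L`-box minus the
translate of the `K`-box by `L - K`, its character sum is `∏ [ℓᵢ]_{zᵢ} - ∏ [kᵢ]_{zᵢ}` with
`[c]_z = 1 + z + ⋯ + z^(c-1)`. For trivial `ψ` this is `τ - κ = m`; otherwise both products agree,
by multiplying with `∏ (zᵢ - 1)` when no `zᵢ` is `1`, and because both vanish when some but not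
all `zᵢ` are `1`. So the image of the chair has the Fourier transform of `ℤ_m` itself, i.e. every
fibre is a single point.
-/

open Finset

lemma Set.bijOn_univ_of_card_filter_eq_one {α β : Type*} [DecidableEq β] {s : Finset α} {f : α → β}
    (h : ∀ g, #{a ∈ s | f a = g} = 1) : Set.BijOn f s Set.univ := by
  refine ⟨Set.mapsTo_univ _ _, fun a ha b hb hab => ?_, fun g _ => ?_⟩
  · obtain ⟨c, hc⟩ := card_eq_one.1 (h (f b))
    have ha' : a ∈ ({c} : Finset α) := by rw [← hc]; exact mem_filter.2 ⟨ha, hab⟩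
    have hb' : b ∈ ({c} : Finset α) := by rw [← hc]; exact mem_filter.2 ⟨hb, rfl⟩
    rw [Finset.mem_singleton.1 ha', Finset.mem_singleton.1 hb']
  · obtain ⟨c, hc⟩ := card_pos.1 ((h g).symm ▸ one_pos)
    exact ⟨c, (mem_filter.1 hc).1, (mem_filter.1 hc).2⟩

section Fourier

variable {α G : Type*} [AddCommGroup G] [Fintype G] [DecidableEq G]

lemma AddChar.sum_mul_sum_eq_card_filter_mul (s : Finset α) (f : α → G) (g : G) :
    ∑ ψ : AddChar G ℂ, ψ (-g) * ∑ a ∈ s, ψ (f a) = #{a ∈ s | f a = g} * Fintype.card G := by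
  simp_rw [mul_sum, ← AddChar.map_add_eq_mul]
  rw [sum_comm]
  simp_rw [AddChar.sum_apply_eq_ite, neg_add_eq_zero, eq_comm (a := g)]
  rw [sum_ite, sum_const_zero, add_zero, sum_const, nsmul_eq_mul]

theorem Set.bijOn_univ_of_sum_addChar_eq (s : Finset α) (f : α → G)
    (h : ∀ ψ : AddChar G ℂ, ∑ a ∈ s, ψ (f a) = ∑ x, ψ x) : Set.BijOn f s Set.univ := by
  refine Set.bijOn_univ_of_card_filter_eq_one fun g => ?_
  have hs := AddChar.sum_mul_sum_eq_card_filter_mul s f g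
  have huniv := AddChar.sum_mul_sum_eq_card_filter_mul Finset.univ id g
  rw [show #{x ∈ Finset.univ | id x = g} = 1 by simp [filter_eq']] at huniv
  simp only [h, id] at hs huniv
  rw [hs] at huniv
  exact_mod_cast mul_right_cancel₀ (Nat.cast_ne_zero.2 Fintype.card_ne_zero) huniv

end Fourier

lemma AddChar.map_sum_eq_prod {ι A M : Type*} [AddCommMonoid A] [CommMonoid M] (ψ : AddChar A M)
    (s : Finset ι) (f : ι → A) : ψ (∑ i ∈ s, f i) = ∏ i ∈ s, ψ (f i) :=
  map_prod ψ.toMonoidHom (fun i => Multiplicative.ofAdd (f i)) s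

section Chair

variable {ι A R : Type*} [Fintype ι] [DecidableEq ι] [AddCommMonoid A] [CommRing R]

def chair (ℓ k : ι → ℕ) : Finset (ι → ℕ) :=
  {ε ∈ Fintype.piFinset fun i => range (ℓ i) | ∃ j, ε j < ℓ j - k j}

lemma coe_chair (ℓ k : ι → ℕ) :
    (chair ℓ k : Set (ι → ℕ)) = {ε | (∀ i, ε i < ℓ i) ∧ ∃ j, ε j < ℓ j - k j} := by
  ext ε
  simp [chair]

lemma filter_not_chair_eq_piFinset_Ico (ℓ k : ι → ℕ) :
    {ε ∈ Fintype.piFinset fun i => range (ℓ i) | ¬∃ j, ε j < ℓ j - k j} =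
      Fintype.piFinset fun i => Ico (ℓ i - k i) (ℓ i) := by
  ext ε
  simp only [mem_filter, Fintype.mem_piFinset, mem_range, mem_Ico, not_exists, not_lt]
  exact ⟨fun h i => ⟨h.2 i, h.1 i⟩, fun h => ⟨fun i => (h i).2, fun i => (h i).1⟩⟩

lemma sum_piFinset_addChar (ψ : AddChar A R) (β : ι → A) (s : ι → Finset ℕ) :
    ∑ ε ∈ Fintype.piFinset s, ψ (∑ i, ε i • β i) = ∏ i, ∑ a ∈ s i, ψ (β i) ^ a := by
  rw [prod_univ_sum]
  refine sum_congr rfl fun ε _ => ?_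
  simp_rw [AddChar.map_sum_eq_prod, AddChar.map_nsmul_eq_pow]

theorem sum_chair_addChar (ψ : AddChar A R) (β : ι → A) {ℓ k : ι → ℕ} (hkℓ : k ≤ ℓ)
    (hβ : ∑ i, (ℓ i - k i) • β i = 0) :
    ∑ ε ∈ chair ℓ k, ψ (∑ i, ε i • β i) =
      ∏ i, ∑ a ∈ range (ℓ i), ψ (β i) ^ a - ∏ i, ∑ a ∈ range (k i), ψ (β i) ^ a := by
  have hcorner : ∏ i, ∑ a ∈ Ico (ℓ i - k i) (ℓ i), ψ (β i) ^ a =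
      ∏ i, ∑ a ∈ range (k i), ψ (β i) ^ a := by
    calc _ = ∏ i, ψ (β i) ^ (ℓ i - k i) * ∑ a ∈ range (k i), ψ (β i) ^ a := by
          refine prod_congr rfl fun i _ => ?_
          rw [sum_Ico_eq_sum_range, mul_sum, Nat.sub_sub_self (hkℓ i)]
          simp_rw [pow_add]
      _ = ψ (∑ i, (ℓ i - k i) • β i) * ∏ i, ∑ a ∈ range (k i), ψ (β i) ^ a := by
          rw [prod_mul_distrib, AddChar.map_sum_eq_prod]
          simp_rw [AddChar.map_nsmul_eq_pow]
      _ = _ := by rw [hβ, AddChar.map_zero_eq_one, one_mul]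
  rw [eq_sub_iff_add_eq, ← hcorner, ← sum_piFinset_addChar, ← sum_piFinset_addChar,
    ← filter_not_chair_eq_piFinset_Ico, chair, sum_filter_add_sum_filter_not]

end Chair

open Fin.NatCast in
lemma Fin.exists_apply_and_not_apply_add_one {n : ℕ} {p : Fin (n + 1) → Prop}
    (h₁ : ∃ i, p i) (h₂ : ∃ i, ¬p i) : ∃ i, p i ∧ ¬p (i + 1) := by
  by_contra! hstep
  obtain ⟨i, hi⟩ := h₁
  obtain ⟨j, hj⟩ := h₂
  have hiter : ∀ t : ℕ, p (i + (t : Fin (n + 1))) := by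
    intro t
    induction t with
    | zero => simpa using hi
    | succ t ih => rw [Nat.cast_succ, ← add_assoc]; exact hstep _ ih
  exact hj (by simpa using hiter (j - i).val)

lemma geom_sum_eq_zero_of_pow_eq_one {R : Type*} [CommRing R] [IsDomain R] {x : R} {c : ℕ}
    (hx : x ≠ 1) (hc : x ^ c = 1) : ∑ a ∈ range c, x ^ a = 0 := by
  have h := geom_sum_mul x c
  rw [hc, sub_self] at h
  exact (mul_eq_zero.1 h).resolve_right (sub_ne_zero.2 hx)

theorem prod_geom_sum_eq_of_pow_eq_pow_add_one {R : Type*} [CommRing R] [IsDomain R] {n : ℕ}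
    {z : Fin (n + 1) → R} {ℓ k : Fin (n + 1) → ℕ} (hz : ∀ i, z i ^ ℓ i = z (i + 1) ^ k (i + 1))
    (hne : ∃ i, z i ≠ 1) :
    ∏ i, ∑ a ∈ range (ℓ i), z i ^ a = ∏ i, ∑ a ∈ range (k i), z i ^ a := by
  by_cases hall : ∀ i, z i ≠ 1
  · apply mul_right_cancel₀ (b := ∏ i, (z i - 1))
      (prod_ne_zero_iff.2 fun i _ => sub_ne_zero.2 (hall i))
    rw [← prod_mul_distrib, ← prod_mul_distrib]
    simp_rw [geom_sum_mul, hz]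
    exact Fintype.prod_equiv (Equiv.addRight 1) _ _ fun i => rfl
  · obtain ⟨i₀, hi₀⟩ := not_forall_not.1 hall
    obtain ⟨i, hi, hi1⟩ := Fin.exists_apply_and_not_apply_add_one hne ⟨i₀, not_not.2 hi₀⟩
    obtain ⟨j, hj, hj1⟩ := Fin.exists_apply_and_not_apply_add_one ⟨i₀, hi₀⟩ hne
    rw [not_not] at hi1
    have hℓ := geom_sum_eq_zero_of_pow_eq_one hi (by rw [hz, hi1, one_pow])
    have hk := geom_sum_eq_zero_of_pow_eq_one hj1 (by rw [← hz, hj, one_pow])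
    rw [prod_eq_zero (mem_univ i) hℓ, prod_eq_zero (mem_univ (j + 1)) hk]

lemma Fin.partialProd_last {M : Type*} [CommMonoid M] {n : ℕ} (f : Fin n → M) :
    Fin.partialProd f (Fin.last n) = ∏ i, f i := by
  rw [Fin.partialProd, Fin.val_last, List.take_of_length_le (by simp), List.prod_ofFn]

theorem mul_eq_mul_add_one_of_mul_succ {M : Type*} [CommMonoid M] {n : ℕ} {ℓ k β : Fin (n + 1) → M}
    (hβ0 : β 0 = 1) (hstep : ∀ i : Fin n, k i.succ * β i.succ = ℓ i.castSucc * β i.castSucc)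
    (hk : ∀ i : Fin n, IsUnit (k i.succ)) (hprod : ∏ i, ℓ i = ∏ i, k i) (i : Fin (n + 1)) :
    ℓ i * β i = k (i + 1) * β (i + 1) := by
  have hpartial : ∀ j, Fin.partialProd (k ∘ Fin.succ) j * β j =
      Fin.partialProd (ℓ ∘ Fin.castSucc) j := by
    intro j
    induction j using Fin.induction with
    | zero => simp [hβ0]
    | succ j ih =>
      rw [Fin.partialProd_succ, Fin.partialProd_succ, ← ih, Function.comp_apply, mul_assoc,
        hstep, Function.comp_apply]
      ac_rfl
  have hlast : ℓ (Fin.last n) * β (Fin.last n) = k 0 := by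
    apply (IsUnit.prod_univ_iff.2 hk).mul_left_cancel
    have h := hpartial (Fin.last n)
    simp only [Fin.partialProd_last, Function.comp_apply] at h
    calc _ = (∏ i : Fin n, k i.succ) * β (Fin.last n) * ℓ (Fin.last n) := by ac_rfl
      _ = ∏ i, ℓ i := by rw [h, Fin.prod_univ_castSucc ℓ]
      _ = _ := by rw [hprod, Fin.prod_univ_succ, mul_comm]
  cases i using Fin.lastCases with
  | last => rw [Fin.last_add_one, hβ0, mul_one, hlast]
  | cast j => rw [Fin.coeSucc_eq_succ, hstep]

lemma sum_sub_nsmul_eq_zero {A : Type*} [AddCommGroup A] {n : ℕ} {ℓ k : Fin (n + 1) → ℕ}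
    {β : Fin (n + 1) → A} (hkℓ : k ≤ ℓ) (hrel : ∀ i, ℓ i • β i = k (i + 1) • β (i + 1)) :
    ∑ i, (ℓ i - k i) • β i = 0 := by
  simp_rw [fun i => sub_nsmul (β i) (hkℓ i), ← sub_eq_add_neg, sum_sub_distrib, hrel]
  exact sub_eq_zero.2 (Fintype.sum_equiv (Equiv.addRight 1) _ _ fun i => rfl)

theorem sum_chair_addChar_eq_sum {m : ℕ} [NeZero m] {n : ℕ} {ℓ k : Fin (n + 1) → ℕ} (hkℓ : k ≤ ℓ)
    (hcard : ∏ i, ℓ i = ∏ i, k i + m) {β : Fin (n + 1) → ZMod m} (hβ0 : β 0 = 1)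
    (hrel : ∀ i, ℓ i • β i = k (i + 1) • β (i + 1)) (ψ : AddChar (ZMod m) ℂ) :
    ∑ ε ∈ chair ℓ k, ψ (∑ i, ε i • β i) = ∑ x, ψ x := by
  rw [sum_chair_addChar ψ β hkℓ (sum_sub_nsmul_eq_zero hkℓ hrel), AddChar.sum_eq_ite]
  split_ifs with hψ
  · subst hψ
    simp only [AddChar.zero_apply, one_pow, sum_const, card_range, nsmul_one, ZMod.card]
    rw [← Nat.cast_prod, ← Nat.cast_prod, hcard, Nat.cast_add, add_sub_cancel_left]
  · rw [sub_eq_zero]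
    refine prod_geom_sum_eq_of_pow_eq_pow_add_one (fun i => ?_) ⟨0, ?_⟩
    · rw [← AddChar.map_nsmul_eq_pow, hrel, AddChar.map_nsmul_eq_pow]
    · rwa [hβ0, ← AddChar.zmod_char_ne_one_iff]

theorem bijOn_chair_of_mul_succ {m : ℕ} [NeZero m] {n : ℕ} {ℓ k : Fin (n + 1) → ℕ}
    (hkℓ : k ≤ ℓ) (hcard : ∏ i, ℓ i = ∏ i, k i + m)
    (hunit : ∀ j : Fin n, IsUnit (k j.succ : ZMod m))
    {β : Fin (n + 1) → ZMod m} (hβ0 : β 0 = 1)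
    (hstep : ∀ j : Fin n, (k j.succ : ZMod m) * β j.succ = ℓ j.castSucc * β j.castSucc) :
    Set.BijOn (fun ε : Fin (n + 1) → ℕ => ∑ i, (ε i : ZMod m) * β i) (chair ℓ k) Set.univ := by
  have hprod : ∏ i, (ℓ i : ZMod m) = ∏ i, (k i : ZMod m) := by
    rw [← Nat.cast_prod, ← Nat.cast_prod, hcard, Nat.cast_add, ZMod.natCast_self, add_zero]
  have hrel (i : Fin (n + 1)) : ℓ i • β i = k (i + 1) • β (i + 1) := by
    simpa only [nsmul_eq_mul] using mul_eq_mul_add_one_of_mul_succ hβ0 hstep hunit hprod i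
  refine Set.bijOn_univ_of_sum_addChar_eq _ _ fun ψ => ?_
  simp_rw [← nsmul_eq_mul]
  exact sum_chair_addChar_eq_sum hkℓ hcard hβ0 hrel ψ

/-- Generalized splitting of `G = ℤ_{τ−κ}` by the discrete chair `S_{L,K}`:
with `β₁ = 1` and `β_{i+1} = k_{i+1}⁻¹ ℓᵢ βᵢ`, the map `E ↦ Σᵢ εᵢβᵢ` is a
bijection from the chair onto `G`. -/
theorem chair_general_splitting (n : ℕ) (hn : 0 < n) (ℓ k : Fin n → ℕ)
    (hlk : ∀ i, 0 < k i ∧ k i < ℓ i)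
    (hunit : ∀ i : Fin n, 0 < (i : ℕ) →
      IsUnit ((k i : ZMod ((∏ i, ℓ i) - ∏ i, k i))))
    (β : Fin n → ZMod ((∏ i, ℓ i) - ∏ i, k i))
    (hβ0 : β ⟨0, hn⟩ = 1)
    (hβ : ∀ i : ℕ, (h : i + 1 < n) →
      β ⟨i + 1, h⟩ =
        Ring.inverse ((k ⟨i + 1, h⟩ : ZMod ((∏ i, ℓ i) - ∏ i, k i))) *
          (ℓ ⟨i, by omega⟩ : ZMod ((∏ i, ℓ i) - ∏ i, k i)) * β ⟨i, by omega⟩) :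
    Set.BijOn (fun ε : Fin n → ℕ => ∑ i, (ε i : ZMod ((∏ i, ℓ i) - ∏ i, k i)) * β i)
      {ε : Fin n → ℕ | (∀ i, ε i < ℓ i) ∧ ∃ j, ε j < ℓ j - k j}
      Set.univ := by
  obtain ⟨n, rfl⟩ : ∃ n', n = n' + 1 := ⟨n - 1, by omega⟩
  have hlt : ∏ i, k i < ∏ i, ℓ i :=
    prod_lt_prod_of_nonempty (fun i _ => (hlk i).1) (fun i _ => (hlk i).2) univ_nonempty
  have : NeZero ((∏ i, ℓ i) - ∏ i, k i) := ⟨by omega⟩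
  rw [← coe_chair]
  refine bijOn_chair_of_mul_succ (fun i => (hlk i).2.le) (by omega)
    (fun j => hunit j.succ j.succ_pos) hβ0 fun ⟨j, hj⟩ => ?_
  simp only [Fin.succ_mk, Fin.castSucc_mk]
  rw [hβ j, mul_assoc, Ring.mul_inverse_cancel_left _ _ (hunit _ j.succ_pos)]
end

section
/- Let L=(ℓ₁,...,ℓₙ), K=(k₁,...,kₙ) ∈ ℤⁿ with 0 < kᵢ < ℓᵢ, and suppose gcd(kᵢ, ∏ⱼℓⱼ) = 1 for at least n−1 indices i. Then there exists a lattice tiling of ℤⁿ with the discrete chair S_{L,K}. -/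
open Finset

lemma chair_keyrep (n : ℕ) (hn : 0 < n) (ℓ k : ℕ → ℤ)
    (hk : ∀ i < n, 0 < k i) (hℓ : ∀ i < n, 0 < ℓ i)
    (hcop : ∀ i, 1 ≤ i → i < n → IsCoprime (k i) (∏ j ∈ range n, ℓ j))
    (d : ℕ → ℤ) (c : ℤ)
    (hsum : ∑ i ∈ range n,
        ((∏ j ∈ range i, ℓ j) * (∏ j ∈ Ico (i+1) n, k j)) * d i
      = c * ((∏ j ∈ range n, ℓ j) - ∏ j ∈ Ico 0 n, k j)) :
    ∃ C : ℕ → ℤ, C (n-1) = c ∧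
      (∀ i, 1 ≤ i → i < n → d i = C i * ℓ i - C (i-1) * k i) ∧
      d 0 = C 0 * ℓ 0 - C (n-1) * k 0 := by
  set P : ℕ → ℤ := fun i => ∏ j ∈ range i, ℓ j with hP
  set Q : ℕ → ℤ := fun i => ∏ j ∈ Ico i n, k j with hQ
  set A : ℕ → ℤ := fun i => P i * Q (i+1) with hA
  set R : ℕ → ℤ := fun i => ∑ j ∈ Ico (i+1) n, A j * d j with hR
  have hPpos : ∀ i, i ≤ n → 0 < P i := by
    intro i hi
    exact Finset.prod_pos (fun j hj => hℓ j (lt_of_lt_of_le (mem_range.mp hj) hi))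
  have hQpos : ∀ i, 0 < Q i := by
    intro i
    exact Finset.prod_pos (fun j hj => hk j (mem_Ico.mp hj).2)
  -- key identity: P n * c - R i = c * Q 0 + ∑_{j ≤ i} A j * d j
  have hkey : ∀ i, i < n → P n * c - R i = c * Q 0 + ∑ j ∈ range (i+1), A j * d j := by
    intro i hi
    have hsplit : (∑ j ∈ range (i+1), A j * d j) + R i = ∑ j ∈ range n, A j * d j := by
      exact Finset.sum_range_add_sum_Ico _ (by omega)
    have : ∑ j ∈ range n, A j * d j = c * (P n - Q 0) := hsum
    linarith [hsplit, this]
  have hdvd : ∀ i, i < n → (P (i+1) * Q (i+1)) ∣ (P n * c - R i) := by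
    intro i hi
    have h1 : P (i+1) ∣ P n * c - R i := by
      have hPn : P (i+1) ∣ P n * c :=
        Dvd.dvd.mul_right (Finset.prod_dvd_prod_of_subset _ _ ℓ
          (Finset.range_subset_range.mpr (by omega))) c
      have hRi : P (i+1) ∣ R i := by
        apply Finset.dvd_sum
        intro j hj
        have hj' := mem_Ico.mp hj
        have : P (i+1) ∣ P j := Finset.prod_dvd_prod_of_subset _ _ ℓ
          (Finset.range_subset_range.mpr (by omega))
        exact Dvd.dvd.mul_right (this.mul_right _) _
      exact dvd_sub hPn hRi
    have h2 : Q (i+1) ∣ P n * c - R i := by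
      rw [hkey i hi]
      apply dvd_add
      · exact Dvd.dvd.mul_left (Finset.prod_dvd_prod_of_subset _ _ k
          (Finset.Ico_subset_Ico (by omega) le_rfl)) c
      · apply Finset.dvd_sum
        intro j hj
        have hj' := mem_range.mp hj
        have : Q (i+1) ∣ Q (j+1) := Finset.prod_dvd_prod_of_subset _ _ k
          (Finset.Ico_subset_Ico (by omega) le_rfl)
        exact Dvd.dvd.mul_right (this.mul_left _) _
    have hco : IsCoprime (P (i+1)) (Q (i+1)) := by
      apply IsCoprime.prod_right
      intro j hj
      have hj' := mem_Ico.mp hj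
      have h := hcop j (by omega) hj'.2
      exact (h.of_isCoprime_of_dvd_right
        (Finset.prod_dvd_prod_of_subset _ _ ℓ (Finset.range_subset_range.mpr (by omega)))).symm
    exact hco.mul_dvd h1 h2
  set C : ℕ → ℤ := fun i => (P n * c - R i) / (P (i+1) * Q (i+1)) with hCdef
  have hC : ∀ i, i < n → C i * (P (i+1) * Q (i+1)) = P n * c - R i := by
    intro i hi
    exact Int.ediv_mul_cancel (hdvd i hi)
  have hRempty : R (n-1) = 0 := by
    simp [hR, show n - 1 + 1 = n by omega]
  have hQempty : Q n = 1 := by simp [hQ]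
  have hCn : C (n-1) = c := by
    have h := hC (n-1) (by omega)
    rw [hRempty, show n - 1 + 1 = n by omega, hQempty, mul_one, sub_zero] at h
    have hPn := hPpos n le_rfl
    have := mul_right_cancel₀ (ne_of_gt hPn) (h.trans (mul_comm (P n) c))
    exact this
  refine ⟨C, hCn, ?_, ?_⟩
  · intro i h1i hin
    have hCi := hC i hin
    have hCi' := hC (i-1) (by omega)
    rw [show i - 1 + 1 = i by omega] at hCi'
    have hRrec : R (i-1) = A i * d i + R i := by
      rw [hR]
      simp only
      rw [show i - 1 + 1 = i by omega]
      exact Finset.sum_eq_sum_Ico_succ_bot hin _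
    have hPsucc : P (i+1) = P i * ℓ i := Finset.prod_range_succ _ _
    have hQsucc : Q i = k i * Q (i+1) := Finset.prod_eq_prod_Ico_succ_bot hin _
    have key : (P i * Q (i+1)) * (d i - (C i * ℓ i - C (i-1) * k i)) = 0 := by
      have hArw : A i = P i * Q (i+1) := rfl
      rw [hPsucc] at hCi
      rw [hQsucc] at hCi'
      rw [hRrec] at hCi'
      rw [hArw] at hCi'
      ring_nf
      ring_nf at hCi hCi' ⊢
      linarith [hCi, hCi']
    have hne : P i * Q (i+1) ≠ 0 :=
      ne_of_gt (mul_pos (hPpos i (by omega)) (hQpos (i+1)))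
    have := (mul_eq_zero.mp key).resolve_left hne
    linarith [this]
  · have hC0 := hC 0 (by omega)
    have hP1 : P 1 = ℓ 0 := by simp [hP]
    have hA0 : A 0 = Q 1 := by simp [hA, hP]
    have hQ0 : Q 0 = k 0 * Q 1 := Finset.prod_eq_prod_Ico_succ_bot hn _
    rw [hkey 0 hn] at hC0
    simp only [zero_add, Finset.range_one, Finset.sum_singleton] at hC0
    rw [hP1, hA0, hQ0] at hC0
    rw [hCn]
    have hne : Q 1 ≠ 0 := ne_of_gt (hQpos 1)
    have key : Q 1 * (d 0 - (C 0 * ℓ 0 - c * k 0)) = 0 := by ring_nf; ring_nf at hC0; linarith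
    have := (mul_eq_zero.mp key).resolve_left hne
    linarith

lemma chair_constancy (n : ℕ) (hn : 0 < n) (ℓ k : ℕ → ℤ)
    (hk : ∀ i < n, 0 < k i) (hkℓ : ∀ i < n, k i < ℓ i)
    (C d : ℕ → ℤ)
    (hrel : ∀ i, 1 ≤ i → i < n → d i = C i * ℓ i - C (i-1) * k i)
    (hwrap : d 0 = C 0 * ℓ 0 - C (n-1) * k 0)
    (hbd : ∀ i < n, -ℓ i < d i ∧ d i < ℓ i)
    (hpos : 0 ≤ C (n-1)) :
    ∀ i < n, C i = C (n-1) := by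
  have hℓpos : ∀ i < n, 0 < ℓ i := fun i hi => lt_trans (hk i hi) (hkℓ i hi)
  -- C 0 ≥ 0 and C 0 ≤ C (n-1)
  have h0n : 0 ≤ C 0 ∧ C 0 ≤ C (n-1) := by
    have hb := hbd 0 hn
    have hkp := hk 0 hn
    have hlp := hℓpos 0 hn
    have hkl := hkℓ 0 hn
    constructor
    · nlinarith [hwrap, hb.1, mul_nonneg hpos (le_of_lt hkp)]
    · nlinarith [hwrap, hb.2, mul_le_mul_of_nonneg_left (le_of_lt hkl) hpos]
  -- all nonneg
  have hnonneg : ∀ i < n, 0 ≤ C i := by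
    intro i
    induction i with
    | zero => intro _; exact h0n.1
    | succ m ih =>
      intro hm
      have hCm := ih (by omega)
      have hr := hrel (m+1) (by omega) hm
      rw [show m + 1 - 1 = m from rfl] at hr
      have hb := hbd (m+1) hm
      have hkp := hk (m+1) hm
      have hlp := hℓpos (m+1) hm
      nlinarith [hb.1, mul_nonneg hCm (le_of_lt hkp)]
  -- weakly decreasing
  have hmono : ∀ i, 1 ≤ i → i < n → C i ≤ C (i-1) := by
    intro i h1 hi
    have hr := hrel i h1 hi
    have hb := hbd i hi
    have hkp := hk i hi
    have hlp := hℓpos i hi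
    have hkl := hkℓ i hi
    have hCp := hnonneg (i-1) (by omega)
    nlinarith [hb.2, mul_le_mul_of_nonneg_left (le_of_lt hkl) hCp]
  have hchain : ∀ i j, i ≤ j → j < n → C j ≤ C i := by
    intro i j hij
    induction j, hij using Nat.le_induction with
    | base => intro _; exact le_rfl
    | succ m hm ih =>
      intro hmn
      have := hmono (m+1) (by omega) hmn
      rw [show m + 1 - 1 = m from rfl] at this
      exact le_trans this (ih (by omega))
  intro i hi
  have h1 : C (n-1) ≤ C i := hchain i (n-1) (by omega) (by omega)
  have h2 : C i ≤ C 0 := hchain 0 i (Nat.zero_le _) hi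
  exact le_antisymm (le_trans h2 h0n.2) h1

lemma chair_injective_core (n : ℕ) (hn : 0 < n) (ℓ k : ℕ → ℤ)
    (hk : ∀ i < n, 0 < k i) (hkℓ : ∀ i < n, k i < ℓ i)
    (hcop : ∀ i, 1 ≤ i → i < n → IsCoprime (k i) (∏ j ∈ range n, ℓ j))
    (x y : ℕ → ℤ)
    (hx : ∀ i < n, 0 ≤ x i ∧ x i < ℓ i) (hy : ∀ i < n, 0 ≤ y i ∧ y i < ℓ i)
    (hxS : ∃ j < n, x j < ℓ j - k j) (hyS : ∃ j < n, y j < ℓ j - k j)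
    (hcong : ((∏ j ∈ range n, ℓ j) - ∏ j ∈ Ico 0 n, k j) ∣
      (∑ i ∈ range n, ((∏ j ∈ range i, ℓ j) * (∏ j ∈ Ico (i+1) n, k j)) * x i
       - ∑ i ∈ range n, ((∏ j ∈ range i, ℓ j) * (∏ j ∈ Ico (i+1) n, k j)) * y i)) :
    ∀ i < n, x i = y i := by
  have hℓpos : ∀ i < n, 0 < ℓ i := fun i hi => lt_trans (hk i hi) (hkℓ i hi)
  set d : ℕ → ℤ := fun i => x i - y i with hd
  obtain ⟨c, hc⟩ := hcong
  have hsum : ∑ i ∈ range n,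
      ((∏ j ∈ range i, ℓ j) * (∏ j ∈ Ico (i+1) n, k j)) * d i
      = c * ((∏ j ∈ range n, ℓ j) - ∏ j ∈ Ico 0 n, k j) := by
    rw [hd]
    simp only [mul_sub]
    rw [Finset.sum_sub_distrib, hc]
    ring
  obtain ⟨C, hCn, hrel, hwrap⟩ := chair_keyrep n hn ℓ k hk hℓpos hcop d c hsum
  have hbd : ∀ i < n, -ℓ i < d i ∧ d i < ℓ i := by
    intro i hi
    have h1 := hx i hi
    have h2 := hy i hi
    constructor <;> simp only [hd] <;> linarith
  have hdc : (0 ≤ c → ∀ i < n, d i = c * (ℓ i - k i)) := by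
    intro hcpos
    have hconst := chair_constancy n hn ℓ k hk hkℓ C d hrel hwrap hbd (hCn ▸ hcpos)
    intro i hi
    rcases Nat.eq_zero_or_pos i with h0 | h1
    · subst h0
      rw [hwrap, hconst 0 hn, hCn]; ring
    · rw [hrel i h1 hi, hconst i hi, hconst (i-1) (by omega), hCn]; ring
  have hdc' : (c ≤ 0 → ∀ i < n, d i = c * (ℓ i - k i)) := by
    intro hcneg
    have hrel' : ∀ i, 1 ≤ i → i < n → (-d i) = (-C i) * ℓ i - (-C (i-1)) * k i := by
      intro i h1 hi; rw [hrel i h1 hi]; ring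
    have hwrap' : -d 0 = (-C 0) * ℓ 0 - (-C (n-1)) * k 0 := by rw [hwrap]; ring
    have hbd' : ∀ i < n, -ℓ i < -d i ∧ -d i < ℓ i := by
      intro i hi; have := hbd i hi; constructor <;> linarith [this.1, this.2]
    have hconst := chair_constancy n hn ℓ k hk hkℓ (fun i => -C i) (fun i => -d i)
      hrel' hwrap' hbd' (by simpa [hCn] using hcneg)
    intro i hi
    rcases Nat.eq_zero_or_pos i with h0 | h1
    · subst h0
      have e0 := hconst 0 hn
      have en := hconst (n-1) (by omega)
      simp only [neg_inj] at e0 en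
      rw [hwrap, e0, hCn]; ring
    · have e0 := hconst i hi
      have e1 := hconst (i-1) (by omega)
      simp only [neg_inj] at e0 e1
      rw [hrel i h1 hi, e0, e1, hCn]; ring
  have hall : ∀ i < n, d i = c * (ℓ i - k i) := by
    rcases le_or_gt 0 c with h | h
    · exact hdc h
    · exact hdc' (le_of_lt h)
  -- now case on c
  rcases lt_trichotomy c 0 with hneg | hzero | hposc
  · exfalso
    obtain ⟨j, hj, hyj⟩ := hyS
    have := hall j hj
    have hxj := (hx j hj).1
    have hkj := hk j hj
    have hklj := hkℓ j hj
    have : y j = x j - c * (ℓ j - k j) := by simp only [hd] at this; linarith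
    nlinarith [this, hxj, hyj]
  · intro i hi
    have := hall i hi
    simp only [hd, hzero, zero_mul] at this
    linarith
  · exfalso
    obtain ⟨j, hj, hxj⟩ := hxS
    have := hall j hj
    have hyj := (hy j hj).1
    have hkj := hk j hj
    have hklj := hkℓ j hj
    have : x j = y j + c * (ℓ j - k j) := by simp only [hd] at this; linarith
    nlinarith [this, hyj, hxj]

theorem chair_aux (n : ℕ) (hn : 0 < n) (ℓ k : Fin n → ℕ)
    (hlk : ∀ i, 0 < k i ∧ k i < ℓ i)
    (hgcd : ∀ i, i ≠ (⟨0, hn⟩ : Fin n) → Nat.gcd (k i) (∏ j, ℓ j) = 1) :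
    ∃ Λ : AddSubgroup (Fin n → ℤ),
      ∀ Z : Fin n → ℤ, ∃! X : Fin n → ℤ, X ∈ Λ ∧
        (∀ i, 0 ≤ Z i - X i ∧ Z i - X i < (ℓ i : ℤ)) ∧
        ∃ j, Z j - X j < (ℓ j : ℤ) - (k j : ℤ) := by
  classical
  set ℓ' : ℕ → ℤ := fun i => if h : i < n then (ℓ ⟨i, h⟩ : ℤ) else 1 with hℓ'
  set k' : ℕ → ℤ := fun i => if h : i < n then (k ⟨i, h⟩ : ℤ) else 1 with hk'
  have hℓ'val : ∀ i : Fin n, ℓ' i.val = (ℓ i : ℤ) := by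
    intro i; simp [hℓ', i.isLt]
  have hk'val : ∀ i : Fin n, k' i.val = (k i : ℤ) := by
    intro i; simp [hk', i.isLt]
  have hkpos : ∀ i < n, 0 < k' i := by
    intro i hi; simp only [hk', dif_pos hi]
    exact_mod_cast (hlk ⟨i, hi⟩).1
  have hklt : ∀ i < n, k' i < ℓ' i := by
    intro i hi; simp only [hk', hℓ', dif_pos hi]
    exact_mod_cast (hlk ⟨i, hi⟩).2
  have hℓpos : ∀ i < n, 0 < ℓ' i := fun i hi => lt_trans (hkpos i hi) (hklt i hi)
  have hprodl : ∏ j ∈ Finset.range n, ℓ' j = ((∏ j, ℓ j : ℕ) : ℤ) := by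
    rw [← Fin.prod_univ_eq_prod_range]
    push_cast
    exact Finset.prod_congr rfl (fun i _ => hℓ'val i)
  have hprodk : ∏ j ∈ Finset.Ico 0 n, k' j = ((∏ j, k j : ℕ) : ℤ) := by
    rw [← Finset.range_eq_Ico, ← Fin.prod_univ_eq_prod_range]
    push_cast
    exact Finset.prod_congr rfl (fun i _ => hk'val i)
  have hcop : ∀ i, 1 ≤ i → i < n → IsCoprime (k' i) (∏ j ∈ Finset.range n, ℓ' j) := by
    intro i h1 hi
    rw [hprodl]
    simp only [hk', dif_pos hi]
    rw [Int.isCoprime_iff_gcd_eq_one, Int.gcd_natCast_natCast]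
    exact hgcd ⟨i, hi⟩ (by simp [Fin.ext_iff]; omega)
  -- M
  set M : ℕ := (∏ j, ℓ j) - (∏ j, k j) with hM
  have hprodlt : (∏ j, k j) < (∏ j, ℓ j) := by
    apply Finset.prod_lt_prod_of_nonempty
    · intro i _; exact (hlk i).1
    · intro i _; exact (hlk i).2
    · exact Finset.univ_nonempty_iff.mpr ⟨⟨0, hn⟩⟩
  have hMpos : 0 < M := by omega
  haveI : NeZero M := NeZero.of_pos hMpos
  have hMZ : (M : ℤ) = (∏ j ∈ Finset.range n, ℓ' j) - ∏ j ∈ Finset.Ico 0 n, k' j := by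
    rw [hprodl, hprodk, hM]
    push_cast [Nat.cast_sub (le_of_lt hprodlt)]
    ring
  -- weights and the hom
  set w : ℕ → ℤ := fun i => (∏ j ∈ Finset.range i, ℓ' j) * (∏ j ∈ Finset.Ico (i+1) n, k' j) with hw
  set ext : (Fin n → ℤ) → ℕ → ℤ := fun X i => if h : i < n then X ⟨i, h⟩ else 0 with hext
  have hextval : ∀ (X : Fin n → ℤ) (i : Fin n), ext X i.val = X i := by
    intro X i; simp [hext, i.isLt]
  set Φ : (Fin n → ℤ) → ℤ := fun X => ∑ i : Fin n, w i.val * X i with hΦ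
  have hΦext : ∀ X, Φ X = ∑ i ∈ Finset.range n, w i * ext X i := by
    intro X
    rw [hΦ, ← Fin.sum_univ_eq_sum_range (fun j => w j * ext X j) n]
    exact Finset.sum_congr rfl (fun i _ => by rw [hextval])
  have hΦadd : ∀ X Y, Φ (X + Y) = Φ X + Φ Y := by
    intro X Y
    simp only [hΦ, Pi.add_apply, mul_add]
    exact Finset.sum_add_distrib
  set φ : (Fin n → ℤ) →+ ZMod M :=
    AddMonoidHom.mk' (fun X => ((Φ X : ℤ) : ZMod M))
      (fun a b => by
        show ((Φ (a + b) : ℤ) : ZMod M) = ((Φ a : ℤ) : ZMod M) + ((Φ b : ℤ) : ZMod M)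
        rw [hΦadd]; push_cast; ring) with hφ
  have hφdvd : ∀ a b : Fin n → ℤ, φ a = φ b → (M : ℤ) ∣ Φ a - Φ b := by
    intro a b h
    have : ((Φ a - Φ b : ℤ) : ZMod M) = 0 := by
      push_cast
      simp only [hφ, AddMonoidHom.mk'_apply] at h
      rw [h]; ring
    exact (ZMod.intCast_zmod_eq_zero_iff_dvd _ _).mp this
  -- the finite chair
  set piBox : Finset (Fin n → ℤ) := Fintype.piFinset (fun i => Finset.Ico (0:ℤ) (ℓ i)) with hpiBox
  set piCorner : Finset (Fin n → ℤ) :=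
    Fintype.piFinset (fun i => Finset.Ico ((ℓ i : ℤ) - k i) (ℓ i)) with hpiCorner
  set Sfin : Finset (Fin n → ℤ) := piBox \ piCorner with hSfin
  have hmem : ∀ s, s ∈ Sfin ↔
      ((∀ i, 0 ≤ s i ∧ s i < (ℓ i : ℤ)) ∧ ∃ j, s j < (ℓ j : ℤ) - (k j : ℤ)) := by
    intro s
    rw [hSfin, Finset.mem_sdiff, hpiBox, hpiCorner, Fintype.mem_piFinset, Fintype.mem_piFinset]
    simp only [Finset.mem_Ico]
    constructor
    · rintro ⟨hbox, hcorner⟩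
      refine ⟨hbox, ?_⟩
      push_neg at hcorner
      obtain ⟨j, hj⟩ := hcorner
      by_cases h : (ℓ j : ℤ) - k j ≤ s j
      · exact absurd (hj h) (not_le.mpr (hbox j).2)
      · exact ⟨j, by linarith [not_le.mp h]⟩
    · rintro ⟨hbox, j, hj⟩
      refine ⟨hbox, ?_⟩
      push_neg
      exact ⟨j, fun h => absurd h (not_le.mpr hj)⟩
  -- injectivity on Sfin
  have hinj : Set.InjOn φ Sfin := by
    intro a ha b hb heq
    have ha' := (hmem a).mp ha
    have hb' := (hmem b).mp hb
    have hdvd := hφdvd a b heq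
    rw [hΦext a, hΦext b] at hdvd
    rw [hMZ] at hdvd
    simp only [hw] at hdvd
    have hres := chair_injective_core n hn ℓ' k' hkpos hklt hcop (ext a) (ext b)
      (fun i hi => by
        have := ha'.1 ⟨i, hi⟩
        simp only [hext, dif_pos hi, hℓ', dif_pos hi]
        exact this)
      (fun i hi => by
        have := hb'.1 ⟨i, hi⟩
        simp only [hext, dif_pos hi, hℓ', dif_pos hi]
        exact this)
      (by
        obtain ⟨j, hj⟩ := ha'.2
        exact ⟨j.val, j.isLt, by
          simp only [hext, dif_pos j.isLt, hℓ', hk', dif_pos j.isLt, Fin.eta]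
          exact hj⟩)
      (by
        obtain ⟨j, hj⟩ := hb'.2
        exact ⟨j.val, j.isLt, by
          simp only [hext, dif_pos j.isLt, hℓ', hk', dif_pos j.isLt, Fin.eta]
          exact hj⟩)
      hdvd
    funext i
    have := hres i.val i.isLt
    rwa [hextval, hextval] at this
  -- cardinality
  have hcard : Sfin.card = M := by
    have hsub : piCorner ⊆ piBox := by
      apply Fintype.piFinset_subset
      intro i
      apply Finset.Ico_subset_Ico _ le_rfl
      have := (hlk i).2
      omega
    rw [hSfin, Finset.card_sdiff_of_subset hsub, hpiBox, hpiCorner,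
      Fintype.card_piFinset, Fintype.card_piFinset]
    simp only [Int.card_Ico, sub_zero, sub_sub_cancel]
    simp [hM]
  -- surjectivity
  have himage : Finset.image φ Sfin = Finset.univ := by
    apply Finset.eq_univ_of_card
    rw [Finset.card_image_of_injOn hinj, hcard, ZMod.card M]
  refine ⟨φ.ker, ?_⟩
  intro Z
  have hz : φ Z ∈ Finset.image φ Sfin := by rw [himage]; exact Finset.mem_univ _
  obtain ⟨s, hs, hφs⟩ := Finset.mem_image.mp hz
  have hs' := (hmem s).mp hs
  refine ⟨Z - s, ⟨?_, ?_, ?_⟩, ?_⟩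
  · -- in kernel
    have : φ (Z - s) = φ Z - φ s := by
      simp only [hφ, AddMonoidHom.mk'_apply]
      have : Φ (Z - s) = Φ Z - Φ s := by
        have := hΦadd (Z - s) s
        simp only [sub_add_cancel] at this
        linarith
      rw [this]; push_cast; ring
    rw [AddMonoidHom.mem_ker, this, hφs, sub_self]
  · intro i
    have := hs'.1 i
    simp only [Pi.sub_apply, sub_sub_cancel]
    exact this
  · obtain ⟨j, hj⟩ := hs'.2
    exact ⟨j, by simp only [Pi.sub_apply, sub_sub_cancel]; exact hj⟩
  · -- uniqueness
    rintro X ⟨hXker, hXbox, hXchair⟩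
    set t : Fin n → ℤ := Z - X with ht
    have htS : t ∈ Sfin := by
      rw [hmem]
      exact ⟨fun i => hXbox i, hXchair⟩
    have hφt : φ t = φ Z := by
      have : φ t = φ Z - φ X := by
        simp only [hφ, AddMonoidHom.mk'_apply]
        have : Φ t = Φ Z - Φ X := by
          have := hΦadd t X
          simp only [ht, sub_add_cancel] at this
          linarith
        rw [this]; push_cast; ring
      rw [this, AddMonoidHom.mem_ker.mp hXker, sub_zero]
    have : t = s := hinj htS hs (by rw [hφt, hφs])
    have : X = Z - s := by
      rw [← this, ht]; ring
    rw [this]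

/-- If `gcd(kᵢ, ∏ⱼ ℓⱼ) = 1` for at least `n−1` of the indices `i`, then there exists
a lattice tiling of `ℤⁿ` with the discrete chair `S_{L,K}`. -/
theorem chair_lattice_tiling_exists (n : ℕ) (ℓ k : Fin n → ℕ)
    (hlk : ∀ i, 0 < k i ∧ k i < ℓ i)
    (hgcd : ∃ i₀ : Fin n, ∀ i ≠ i₀, Nat.gcd (k i) (∏ j, ℓ j) = 1) :
    ∃ Λ : AddSubgroup (Fin n → ℤ),
      ∀ Z : Fin n → ℤ, ∃! X : Fin n → ℤ, X ∈ Λ ∧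
        (∀ i, 0 ≤ Z i - X i ∧ Z i - X i < (ℓ i : ℤ)) ∧
        ∃ j, Z j - X j < (ℓ j : ℤ) - (k j : ℤ) := by
  obtain ⟨i₀, hgcd⟩ := hgcd
  have hn : 0 < n := i₀.pos
  set e : Fin n ≃ Fin n := Equiv.swap (⟨0, hn⟩ : Fin n) i₀ with he
  have hee : ∀ i, e (e i) = i := fun i => Equiv.swap_apply_self _ _ i
  have he0 : e ⟨0, hn⟩ = i₀ := Equiv.swap_apply_left _ _
  have hgcd' : ∀ i, i ≠ (⟨0, hn⟩ : Fin n) →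
      Nat.gcd ((k ∘ e) i) (∏ j, (ℓ ∘ e) j) = 1 := by
    intro i hi
    have hprod : ∏ j, (ℓ ∘ e) j = ∏ j, ℓ j := Equiv.prod_comp e ℓ
    rw [hprod]
    apply hgcd
    intro hcon
    exact hi (e.injective (by rw [hcon, he0]))
  obtain ⟨Λ', hΛ'⟩ := chair_aux n hn (ℓ ∘ e) (k ∘ e) (fun i => hlk (e i)) hgcd'
  set ψ : (Fin n → ℤ) →+ (Fin n → ℤ) :=
    AddMonoidHom.mk' (fun X => X ∘ e) (fun a b => rfl) with hψ
  refine ⟨Λ'.comap ψ, ?_⟩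
  intro Z
  obtain ⟨X', ⟨hker', hbox', hchair'⟩, huniq'⟩ := hΛ' (Z ∘ e)
  refine ⟨X' ∘ e, ⟨?_, ?_, ?_⟩, ?_⟩
  · rw [AddSubgroup.mem_comap]
    have : ψ (X' ∘ e) = X' := by
      simp only [hψ, AddMonoidHom.mk'_apply]
      funext i
      simp [hee]
    rw [this]
    exact hker'
  · intro i
    have := hbox' (e i)
    simpa [hee] using this
  · obtain ⟨j', hj'⟩ := hchair'
    refine ⟨e j', ?_⟩
    simp only [Function.comp_apply, hee]
    simpa using hj'
  · rintro X₂ ⟨hker₂, hbox₂, hchair₂⟩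
    have h₂' : (X₂ ∘ e) ∈ Λ' ∧
        (∀ i, 0 ≤ (Z ∘ e) i - (X₂ ∘ e) i ∧ (Z ∘ e) i - (X₂ ∘ e) i < ((ℓ ∘ e) i : ℤ)) ∧
        ∃ j, (Z ∘ e) j - (X₂ ∘ e) j < ((ℓ ∘ e) j : ℤ) - ((k ∘ e) j : ℤ) := by
      refine ⟨?_, ?_, ?_⟩
      · rw [AddSubgroup.mem_comap] at hker₂
        exact hker₂
      · intro i
        exact hbox₂ (e i)
      · obtain ⟨j, hj⟩ := hchair₂
        refine ⟨e.symm j, ?_⟩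
        have : e (e.symm j) = j := e.apply_symm_apply j
        simp only [Function.comp_apply, this]
        exact hj
    have heq : X₂ ∘ e = X' := huniq' (X₂ ∘ e) h₂'
    funext i
    have : (X₂ ∘ e) (e i) = X' (e i) := by rw [heq]
    simpa [hee] using this
end

section
/- For X=(x₁,...,xₙ) ∈ ℝⁿ, the chair S_{L,K} intersects its translate X + S_{L,K} if and only if |xᵢ| < ℓᵢ for all i, and there exist indices j, r with xⱼ < ℓⱼ−kⱼ and xᵣ > −(ℓᵣ−kᵣ). -/
/-- The chair `S_{L,K}` intersects its translate `X + S_{L,K}` if and only if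
`|xᵢ| < ℓᵢ` for all `i` and there are indices `j, r` with `xⱼ < ℓⱼ − kⱼ` and
`xᵣ > −(ℓᵣ − kᵣ)`. -/
theorem chair_translate_intersect (n : ℕ) (L K : Fin n → ℝ)
    (h : ∀ i, 0 < K i ∧ K i < L i) (X : Fin n → ℝ) :
    ({y : Fin n → ℝ | (∀ i, 0 ≤ y i ∧ y i < L i) ∧ ∃ j, y j < L j - K j} ∩
        ((fun s => X + s) ''
          {y : Fin n → ℝ | (∀ i, 0 ≤ y i ∧ y i < L i) ∧
            ∃ j, y j < L j - K j})).Nonempty ↔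
      (∀ i, |X i| < L i) ∧ (∃ j, X j < L j - K j) ∧
        ∃ r, -(L r - K r) < X r := by
  constructor
  · rintro ⟨y, ⟨⟨hy, j, hj⟩, z, ⟨⟨hz, r, hr⟩, rfl⟩⟩⟩
    simp only [Pi.add_apply] at hy hj
    refine ⟨fun i => ?_, ⟨j, ?_⟩, ⟨r, ?_⟩⟩
    · have h1 := hy i
      have h2 := hz i
      rw [abs_lt]
      constructor <;> linarith [h1.1, h1.2, h2.1, h2.2]
    · linarith [(hz j).1]
    · linarith [(hy r).1]
  · rintro ⟨hX, ⟨j, hj⟩, r, hr⟩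
    refine ⟨fun i => max (X i) 0, ⟨fun i => ⟨le_max_right _ _, ?_⟩, j, ?_⟩,
      fun i => max (X i) 0 - X i, ⟨⟨fun i => ?_, r, ?_⟩, ?_⟩⟩
    · have := abs_lt.mp (hX i)
      have := (h i).1
      have := (h i).2
      rcases max_cases (X i) 0 with ⟨he, _⟩ | ⟨he, _⟩ <;> simp only [he] <;> linarith
    · have := (h j).1
      have := (h j).2
      rcases max_cases (X j) 0 with ⟨he, _⟩ | ⟨he, _⟩ <;> simp only [he] <;> linarith
    · have := abs_lt.mp (hX i)
      constructor <;>
        rcases max_cases (X i) 0 with ⟨he, _⟩ | ⟨he, _⟩ <;> simp only [he] <;> linarith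
    · have := (h r).1
      have := (h r).2
      rcases max_cases (X r) 0 with ⟨he, _⟩ | ⟨he, _⟩ <;> simp only [he] <;> linarith
    · funext i
      simp
end

section
/- Let L,K ∈ ℝⁿ with 0 < kᵢ < ℓᵢ, and let Λ be the lattice generated by the rows of the n×n matrix G with Gᵢᵢ = ℓᵢ, G_{i,i+1} = −k_{i+1} for 1 ≤ i ≤ n−1, G_{n,1} = −k₁, and all other entries 0. Then the translates {V + S_{L,K} : V ∈ Λ} tile ℝⁿ: they have pairwise disjoint interiors and their closures cover ℝⁿ. -/
/-!
The lattice point `∑ uᵢ Vᵢ` has coordinates `uⱼℓⱼ − u_{j−1}kⱼ` (indices mod `n`), so `x` lies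
in the box part of its translate of `S` iff `uⱼ = fⱼ(u_{j−1})` for all `j`, where
`fⱼ(m) = ⌊(xⱼ + m kⱼ)/ℓⱼ⌋`: `u` is a periodic orbit of the cyclic chain of maps `fⱼ`. Given that,
the corner condition `∃ j, yⱼ < ℓⱼ − kⱼ` on `y = x − ∑ uᵢ Vᵢ` says exactly that `u + 1` is not an
orbit.

Each `fⱼ` is monotone and `fⱼ(m) − m` is antitone (as `kⱼ ≤ ℓⱼ`); both properties pass to the
return map `F = f₀ ∘ f_{n−1} ∘ ⋯ ∘ f₁`. Orbits correspond to fixed points of `F` via `u ↦ u₀`, and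
these form a nonempty interval of `ℤ` bounded above. The orbit `u` with `u + 1` not an orbit is the
one through the largest fixed point, so every `x` lies in exactly one translate of `S`.
-/

open Filter Fin.NatCast

section CyclicOrbit

variable {n : ℕ} [NeZero n] (f : Fin n → ℤ → ℤ)

def IsCyclicOrbit (u : Fin n → ℤ) : Prop :=
  ∀ j, f j (u (j - 1)) = u j

def orbitSeq (m : ℤ) : ℕ → ℤ
  | 0 => m
  | t + 1 => f (t + 1 : ℕ) (orbitSeq m t)

def returnMap (m : ℤ) : ℤ :=
  orbitSeq f m n

variable {f} {u v : Fin n → ℤ} {m : ℤ}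

theorem IsCyclicOrbit.orbitSeq_eq (hu : IsCyclicOrbit f u) (t : ℕ) :
    orbitSeq f (u 0) t = u t := by
  induction t with
  | zero => simp [orbitSeq]
  | succ t ih =>
    rw [orbitSeq, ih, ← hu ((t + 1 : ℕ) : Fin n), Nat.cast_succ, add_sub_cancel_right]

theorem IsCyclicOrbit.returnMap_eq (hu : IsCyclicOrbit f u) : returnMap f (u 0) = u 0 := by
  rw [returnMap, hu.orbitSeq_eq, Fin.natCast_self]

theorem IsCyclicOrbit.ext (hu : IsCyclicOrbit f u) (hv : IsCyclicOrbit f v) (h : u 0 = v 0) :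
    u = v := by
  funext j
  rw [← Fin.cast_val_eq_self j, ← hu.orbitSeq_eq, ← hv.orbitSeq_eq, h]

theorem orbitSeq_periodic (h : returnMap f m = m) : Function.Periodic (orbitSeq f m) n := by
  intro t
  induction t with
  | zero => simpa [returnMap, orbitSeq] using h
  | succ t ih => rw [add_right_comm, orbitSeq, ih, orbitSeq]; simp

theorem isCyclicOrbit_orbitSeq (h : returnMap f m = m) :
    IsCyclicOrbit f fun j => orbitSeq f m j := by
  have hcast (t : ℕ) : orbitSeq f m ((t : Fin n) : ℕ) = orbitSeq f m t := by
    rw [Fin.val_natCast, (orbitSeq_periodic h).map_mod_nat]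
  intro j
  obtain ⟨t, ht⟩ : ∃ t, t + 1 = (j : ℕ) + n := ⟨j + (n - 1), by have := NeZero.pos n; omega⟩
  have hj : ((t + 1 : ℕ) : Fin n) = j := by simp [ht]
  have hj1 : ((t : ℕ) : Fin n) = j - 1 := by rw [← hj]; simp
  show f j (orbitSeq f m (j - 1 : Fin n)) = orbitSeq f m j
  rw [← hj1, hcast, ← hj, hcast]
  rfl

theorem monotone_orbitSeq (hmono : ∀ j, Monotone (f j)) (t : ℕ) :
    Monotone fun m => orbitSeq f m t := by
  induction t with
  | zero => exact monotone_id
  | succ t ih => exact (hmono _).comp ih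

theorem monotone_returnMap (hmono : ∀ j, Monotone (f j)) : Monotone (returnMap f) :=
  monotone_orbitSeq hmono n

theorem le_orbitSeq (hmono : ∀ j, Monotone (f j)) (hm : ∀ j, m ≤ f j m) (t : ℕ) :
    m ≤ orbitSeq f m t := by
  induction t with
  | zero => exact le_rfl
  | succ t ih => exact (hm _).trans (hmono _ ih)

theorem orbitSeq_le (hmono : ∀ j, Monotone (f j)) (hm : ∀ j, f j m ≤ m) (t : ℕ) :
    orbitSeq f m t ≤ m := by
  induction t with
  | zero => exact le_rfl
  | succ t ih => exact (hmono _ ih).trans (hm _)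

theorem returnMap_lt (hmono : ∀ j, Monotone (f j)) (hm : ∀ j, f j m < m) : returnMap f m < m := by
  have hstep (t : ℕ) : orbitSeq f m (t + 1) < m :=
    (hmono _ (orbitSeq_le hmono (fun j => (hm j).le) t)).trans_lt (hm _)
  simpa [returnMap, Nat.sub_add_cancel (NeZero.pos n)] using hstep (n - 1)

theorem antitone_orbitSeq_sub (hmono : ∀ j, Monotone (f j))
    (hslope : ∀ j, Antitone fun m => f j m - m) {m m' : ℤ} (h : m ≤ m') :
    Antitone fun t => orbitSeq f m' t - orbitSeq f m t := by
  refine antitone_nat_of_succ_le fun t => ?_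
  have := hslope ((t + 1 : ℕ) : Fin n) (monotone_orbitSeq hmono t h)
  simp only [orbitSeq] at this ⊢
  omega

theorem antitone_returnMap_sub (hmono : ∀ j, Monotone (f j))
    (hslope : ∀ j, Antitone fun m => f j m - m) : Antitone fun m => returnMap f m - m := by
  intro _ _ h
  have := antitone_orbitSeq_sub hmono hslope h (Nat.zero_le n)
  simp only [orbitSeq] at this
  change returnMap f _ - returnMap f _ ≤ _ at this
  dsimp only
  omega

theorem IsCyclicOrbit.isCyclicOrbit_add_one (hmono : ∀ j, Monotone (f j))
    (hslope : ∀ j, Antitone fun m => f j m - m) (hu : IsCyclicOrbit f u)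
    (h : returnMap f (u 0 + 1) = u 0 + 1) : IsCyclicOrbit f (u + 1) := by
  have hd := antitone_orbitSeq_sub hmono hslope (Int.le_add_one le_rfl : u 0 ≤ u 0 + 1)
  have hshift (t : ℕ) (ht : t ≤ n) : orbitSeq f (u 0 + 1) t = orbitSeq f (u 0) t + 1 := by
    have h1 := hd ht
    have h2 := hd (Nat.zero_le t)
    change returnMap f (u 0 + 1) - returnMap f (u 0) ≤ _ at h1
    rw [h, hu.returnMap_eq] at h1
    simp only [orbitSeq] at h1 h2
    omega
  convert isCyclicOrbit_orbitSeq h using 1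
  funext j
  rw [hshift j j.is_lt.le, hu.orbitSeq_eq, Fin.cast_val_eq_self]
  rfl

end CyclicOrbit

theorem exists_fixed_succ_ne {F : ℤ → ℤ} (hF : Monotone F) (hF' : Antitone fun m => F m - m)
    {a b : ℤ} (ha : a ≤ F a) (hb : F b < b) : ∃ m, F m = m ∧ F (m + 1) ≠ m + 1 := by
  obtain ⟨m, hm, hmax⟩ := Int.exists_greatest_of_bdd (P := fun m => m ≤ F m)
    ⟨b, fun z hz => by by_contra! hbz; have := hF' hbz.le; simp only at this; omega⟩ ⟨a, ha⟩
  have hsucc : F (m + 1) < m + 1 := by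
    by_contra! h
    have := hmax _ h
    omega
  have := hF (Int.le_add_one le_rfl : m ≤ m + 1)
  exact ⟨m, by omega, hsucc.ne⟩

theorem eq_of_fixed_of_succ_ne {F : ℤ → ℤ} (hF : Antitone fun m => F m - m) {a b : ℤ}
    (ha : F a = a) (hb : F b = b) (ha' : F (a + 1) ≠ a + 1) (hb' : F (b + 1) ≠ b + 1) :
    a = b := by
  wlog hab : a ≤ b generalizing a b
  · exact (this hb ha hb' ha' (le_of_not_ge hab)).symm
  by_contra hne
  have h1 := hF (Int.le_add_one le_rfl : a ≤ a + 1)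
  have h2 := hF (show a + 1 ≤ b by omega)
  simp only at h1 h2
  omega

theorem existsUnique_isCyclicOrbit_not_add_one {n : ℕ} [NeZero n] {f : Fin n → ℤ → ℤ}
    (hmono : ∀ j, Monotone (f j)) (hslope : ∀ j, Antitone fun m => f j m - m) {a b : ℤ}
    (ha : ∀ j, a ≤ f j a) (hb : ∀ j, f j b < b) :
    ∃! u : Fin n → ℤ, IsCyclicOrbit f u ∧ ¬IsCyclicOrbit f (u + 1) := by
  obtain ⟨m, hm, hm'⟩ := exists_fixed_succ_ne (monotone_returnMap hmono)
    (antitone_returnMap_sub hmono hslope) (le_orbitSeq hmono ha n) (returnMap_lt hmono hb)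
  refine ⟨_, ⟨isCyclicOrbit_orbitSeq hm, fun h => hm' ?_⟩, fun v hv => ?_⟩
  · simpa [orbitSeq] using h.returnMap_eq
  · have hv0 : v 0 = m := eq_of_fixed_of_succ_ne (antitone_returnMap_sub hmono hslope)
      hv.1.returnMap_eq hm (mt (hv.1.isCyclicOrbit_add_one hmono hslope) hv.2) hm'
    exact hv.1.ext (isCyclicOrbit_orbitSeq hm) (by simpa [orbitSeq] using hv0)

section Chair

variable {n : ℕ} (L K x : Fin n → ℝ)

def chairBasisVector (i : Fin n) : Fin n → ℝ := fun j =>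
  if j = i then L i else if (j : ℕ) = ((i : ℕ) + 1) % n then -(K j) else 0

theorem sum_zsmul_chairBasisVector_apply (hn : 2 ≤ n) [NeZero n] (u : Fin n → ℤ) (j : Fin n) :
    (∑ i, u i • chairBasisVector L K i) j = u j * L j - u (j - 1) * K j := by
  have hsucc (i : Fin n) : (j : ℕ) = ((i : ℕ) + 1) % n ↔ i = j - 1 := by
    rw [eq_sub_iff_add_eq, Fin.ext_iff, Fin.val_add, Fin.val_one', Nat.add_mod_mod, eq_comm]
  have hterm (i : Fin n) : u i • chairBasisVector L K i j =
      (if i = j then u i * L i else 0) + (if i = j - 1 then -(u i * K j) else 0) := by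
    by_cases hij : i = j
    · subst hij
      simp [chairBasisVector, eq_sub_iff_add_eq, show n ≠ 1 by omega]
    · simp [chairBasisVector, Ne.symm hij, hsucc, hij]
  simp only [Finset.sum_apply, Pi.smul_apply, hterm, Finset.sum_add_distrib, Finset.sum_ite_eq',
    Finset.mem_univ, if_true]
  ring

noncomputable def chairStep (j : Fin n) (m : ℤ) : ℤ :=
  ⌊(x j + m * K j) / L j⌋

variable {L K} {j : Fin n}

theorem chairStep_eq_iff (hL : 0 < L j) {m k : ℤ} :
    chairStep L K x j m = k ↔
      0 ≤ x j - (k * L j - m * K j) ∧ x j - (k * L j - m * K j) < L j := by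
  rw [chairStep, Int.floor_eq_iff, le_div_iff₀ hL, div_lt_iff₀ hL]
  constructor <;> rintro ⟨h1, h2⟩ <;> constructor <;> linarith

theorem monotone_chairStep (hL : 0 < L j) (hK : 0 ≤ K j) : Monotone (chairStep L K x j) :=
  fun _ _ hab => Int.floor_mono <| div_le_div_of_nonneg_right (by gcongr) hL.le

theorem antitone_chairStep_sub (hL : 0 < L j) (hKL : K j ≤ L j) :
    Antitone fun m => chairStep L K x j m - m := by
  intro a b hab
  have hab' : (a : ℝ) ≤ b := by exact_mod_cast hab
  have hle : (x j + b * K j) / L j ≤ (x j + a * K j) / L j + ((b - a : ℤ) : ℝ) := by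
    rw [div_add' _ _ _ hL.ne', div_le_div_iff_of_pos_right hL]
    push_cast
    nlinarith
  have := Int.floor_mono hle
  rw [Int.floor_add_intCast] at this
  simp only [chairStep]
  omega

theorem isCyclicOrbit_chairStep_iff [NeZero n] (hL : ∀ j, 0 < L j) {u : Fin n → ℤ} :
    IsCyclicOrbit (chairStep L K x) u ↔
      ∀ j, 0 ≤ x j - (u j * L j - u (j - 1) * K j) ∧ x j - (u j * L j - u (j - 1) * K j) < L j :=
  forall_congr' fun j => chairStep_eq_iff x (hL j)

theorem chair_conditions_iff_isCyclicOrbit [NeZero n] (hL : ∀ j, 0 < L j) (hKL : ∀ j, K j ≤ L j)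
    (u : Fin n → ℤ) :
    ((∀ j, 0 ≤ x j - (u j * L j - u (j - 1) * K j) ∧ x j - (u j * L j - u (j - 1) * K j) < L j) ∧
        ∃ j, x j - (u j * L j - u (j - 1) * K j) < L j - K j) ↔
      IsCyclicOrbit (chairStep L K x) u ∧ ¬IsCyclicOrbit (chairStep L K x) (u + 1) := by
  rw [isCyclicOrbit_chairStep_iff x hL, isCyclicOrbit_chairStep_iff x hL]
  refine and_congr_right fun hbox => ?_
  simp only [Pi.add_apply, Pi.one_apply, Int.cast_add, Int.cast_one, not_forall, not_and, not_lt]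
  refine exists_congr fun j => ⟨fun h h' => ?_, fun h => ?_⟩
  · linarith
  · by_contra! h'
    linarith [h (by linarith), (hbox j).2, hKL j]

theorem existsUnique_chairStep_orbit [NeZero n] (hK : ∀ j, 0 < K j) (hKL : ∀ j, K j < L j) :
    ∃! u : Fin n → ℤ,
      IsCyclicOrbit (chairStep L K x) u ∧ ¬IsCyclicOrbit (chairStep L K x) (u + 1) := by
  have hL j : 0 < L j := (hK j).trans (hKL j)
  obtain ⟨b, hb⟩ : ∃ b : ℤ, ∀ j, |x j| < b * (L j - K j) :=
    (eventually_all.2 fun j => (tendsto_intCast_atTop_atTop.atTop_mul_const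
      (sub_pos.2 (hKL j))).eventually_gt_atTop |x j|).exists
  refine existsUnique_isCyclicOrbit_not_add_one (a := -b) (b := b)
    (fun j => monotone_chairStep x (hL j) (hK j).le)
    (fun j => antitone_chairStep_sub x (hL j) (hKL j).le) (fun j => ?_) (fun j => ?_)
  · rw [chairStep, Int.le_floor, le_div_iff₀ (hL j)]
    push_cast
    linarith [neg_abs_le (x j), hb j]
  · rw [chairStep, Int.floor_lt, div_lt_iff₀ (hL j)]
    linarith [le_abs_self (x j), hb j]

end Chair

/-- The lattice generated by the rows of the matrix with diagonal `ℓᵢ`,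
superdiagonal `−k_{i+1}`, and corner `−k₁` tiles `ℝⁿ` with the chair `S_{L,K}`:
translates have pairwise disjoint interiors and their closures cover `ℝⁿ`. -/
theorem chair_lattice_tiling_real (n : ℕ) (hn : 2 ≤ n) (L K : Fin n → ℝ)
    (h : ∀ i, 0 < K i ∧ K i < L i) :
    let S : Set (Fin n → ℝ) :=
      {y | (∀ i, 0 ≤ y i ∧ y i < L i) ∧ ∃ j, y j < L j - K j}
    let V : Fin n → Fin n → ℝ := fun i j =>
      if j = i then L i else if (j : ℕ) = ((i : ℕ) + 1) % n then -(K j) else 0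
    let Λ : Set (Fin n → ℝ) := {X | ∃ lam : Fin n → ℤ, X = ∑ i, lam i • V i}
    (∀ U ∈ Λ, ∀ W ∈ Λ, U ≠ W →
        interior ((fun s => U + s) '' S) ∩ interior ((fun s => W + s) '' S) = ∅) ∧
      ∀ x : Fin n → ℝ, ∃ U ∈ Λ, x ∈ closure ((fun s => U + s) '' S) := by
  intro S V Λ
  have : NeZero n := ⟨by omega⟩
  have hL i : 0 < L i := (h i).1.trans (h i).2
  have hmem (u : Fin n → ℤ) (x : Fin n → ℝ) : x ∈ (fun s => ∑ i, u i • V i + s) '' S ↔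
      IsCyclicOrbit (chairStep L K x) u ∧ ¬IsCyclicOrbit (chairStep L K x) (u + 1) := by
    have hV : ∀ j, (∑ i, u i • V i) j = u j * L j - u (j - 1) * K j :=
      sum_zsmul_chairBasisVector_apply L K hn u
    rw [← chair_conditions_iff_isCyclicOrbit x hL (fun i => (h i).2.le), Set.image_add_left]
    simp only [Set.mem_preimage, S, Set.mem_ofPred_eq, neg_add_eq_sub, Pi.sub_apply, hV]
  have hunique x := existsUnique_chairStep_orbit x (fun i => (h i).1) (fun i => (h i).2)
  refine ⟨?_, fun x => ?_⟩
  · rintro _ ⟨u, rfl⟩ _ ⟨v, rfl⟩ huv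
    refine Set.eq_empty_iff_forall_notMem.2 fun x ⟨hxu, hxv⟩ => huv ?_
    rw [(hunique x).unique ((hmem u x).1 (interior_subset hxu))
      ((hmem v x).1 (interior_subset hxv))]
  · obtain ⟨u, hu, -⟩ := hunique x
    exact ⟨_, ⟨u, rfl⟩, subset_closure ((hmem u x).2 hu)⟩
end

section
/- The determinant of the n×n matrix with diagonal entries ℓᵢ, superdiagonal entries −k_{i+1} (entry (i,i+1) for 1 ≤ i ≤ n−1), corner entry −k₁ at position (n,1), and zeros elsewhere, equals ∏ᵢℓᵢ − ∏ᵢkᵢ. -/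
/-- The determinant of the matrix with diagonal `ℓᵢ`, superdiagonal `−k_{i+1}`,
corner entry `−k₁` at position `(n,1)`, and zeros elsewhere, equals
`∏ᵢ ℓᵢ − ∏ᵢ kᵢ`. -/
theorem chair_matrix_det (n : ℕ) (hn : 2 ≤ n) (L K : Fin n → ℝ) :
    Matrix.det (Matrix.of fun i j : Fin n =>
        if j = i then L i
        else if (j : ℕ) = ((i : ℕ) + 1) % n then -(K j) else 0) =
      ∏ i, L i - ∏ i, K i := by
  obtain ⟨m, rfl⟩ : ∃ m, n = m + 1 := ⟨n - 1, by omega⟩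
  have hm : 1 ≤ m := by omega
  rw [Matrix.det_succ_column_zero]
  rw [Finset.sum_eq_add_of_mem (0 : Fin (m+1)) (Fin.last m) (Finset.mem_univ _) (Finset.mem_univ _)
    (by intro h; have := congrArg Fin.val h; simp at this; omega)]
  · simp only [Matrix.of_apply]
    rw [Fin.succAbove_zero, Fin.succAbove_last]
    have hA : ((Matrix.of fun i j : Fin (m+1) =>
        if j = i then L i
        else if (j : ℕ) = ((i : ℕ) + 1) % (m+1) then -(K j) else 0).submatrix
        Fin.succ Fin.succ).det = ∏ i : Fin m, L i.succ := by
      rw [Matrix.det_of_upperTriangular]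
      · exact Finset.prod_congr rfl fun i _ => by
          simp [Matrix.submatrix_apply]
      · intro i j hji
        have hji' : (j : ℕ) < (i : ℕ) := hji
        simp only [Matrix.submatrix_apply, Matrix.of_apply, Fin.val_succ]
        rw [if_neg, if_neg]
        · rcases Nat.lt_or_ge ((i : ℕ) + 2) (m + 1) with h | h
          · rw [Nat.mod_eq_of_lt h]; omega
          · have : ((i : ℕ) + 1 + 1) % (m + 1) = 0 := by
              have : (i : ℕ) + 2 = m + 1 := by omega
              rw [this, Nat.mod_self]
            rw [this]; omega
        · intro h
          exact absurd (Fin.succ_inj.mp h) (by intro h'; subst h'; exact lt_irrefl _ hji')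
    have hB : ((Matrix.of fun i j : Fin (m+1) =>
        if j = i then L i
        else if (j : ℕ) = ((i : ℕ) + 1) % (m+1) then -(K j) else 0).submatrix
        Fin.castSucc Fin.succ).det = (-1 : ℝ) ^ m * ∏ i : Fin m, K i.succ := by
      rw [Matrix.det_of_lowerTriangular]
      · have he : ∀ i : Fin m,
            ((Matrix.of fun i j : Fin (m+1) =>
              if j = i then L i
              else if (j : ℕ) = ((i : ℕ) + 1) % (m+1) then -(K j) else 0).submatrix
              Fin.castSucc Fin.succ) i i = -(K i.succ) := by
          intro i
          simp only [Matrix.submatrix_apply, Matrix.of_apply]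
          rw [if_neg, if_pos]
          · simp only [Fin.val_succ, Fin.coe_castSucc]
            exact (Nat.mod_eq_of_lt (by omega)).symm
          · intro h
            have := congrArg Fin.val h
            simp only [Fin.val_succ, Fin.coe_castSucc] at this
            omega
        rw [Finset.prod_congr rfl (fun i _ => he i)]
        have : ∏ i : Fin m, -(K i.succ) = ∏ i : Fin m, (-1 : ℝ) * K i.succ :=
          Finset.prod_congr rfl fun i _ => (neg_one_mul _).symm
        rw [this, Finset.prod_mul_distrib]
        simp
      · intro i j hji
        have hij : (i : ℕ) < (j : ℕ) := hji
        simp only [Matrix.submatrix_apply, Matrix.of_apply, Fin.val_succ, Fin.coe_castSucc]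
        rw [if_neg, if_neg]
        · rw [Nat.mod_eq_of_lt (by omega)]
          omega
        · intro h
          have := congrArg Fin.val h
          simp only [Fin.val_succ, Fin.coe_castSucc] at this
          omega
    rw [hA, hB]
    have hsq : ((-1:ℝ))^m * ((-1:ℝ))^m = 1 := by
      rw [← pow_add]; exact Even.neg_one_pow ⟨m, rfl⟩
    rw [Fin.prod_univ_succ L, Fin.prod_univ_succ K]
    rw [if_true, if_neg (by intro h; have := congrArg Fin.val h; simp at this; omega),
      if_pos (by simp)]
    simp only [Fin.val_zero, Fin.val_last, pow_zero]
    linear_combination (-(K 0 * ∏ i : Fin m, K i.succ)) * hsq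
  · intro c _ hc
    obtain ⟨hc0, hcl⟩ := hc
    have h1 : (c.val : ℕ) < m := Fin.val_lt_last hcl
    have h2 : (0 : Fin (m+1)) ≠ c := fun h => hc0 h.symm
    simp only [Matrix.of_apply]
    rw [if_neg h2, if_neg]
    · ring
    · have h3 : ((c:ℕ)+1) % (m+1) = (c:ℕ)+1 := Nat.mod_eq_of_lt (by omega)
      have h0 : ((0 : Fin (m+1)) : ℕ) = 0 := rfl
      rw [h3, h0]
      omega
end

section
/- Let Λ ⊆ ℤⁿ be a lattice whose translates of S(n,t,ℓ) are pairwise disjoint. If X ∈ Λ is nonzero with |xᵢ| ≤ ℓ for all i, then X has at least t+1 strictly positive coordinates or at least t+1 strictly negative coordinates. -/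
/-- If the translates of the sphere `S(n,t,ℓ)` by a lattice `Λ ⊆ ℤⁿ` are pairwise
disjoint, then any nonzero `X ∈ Λ` with `|xᵢ| ≤ ℓ` for all `i` has at least `t+1`
strictly positive coordinates or at least `t+1` strictly negative coordinates. -/
theorem packing_coord_count (n t ℓ : ℕ) (Λ : AddSubgroup (Fin n → ℤ))
    (hpack : ∀ X ∈ Λ, ∀ Y ∈ Λ, X ≠ Y →
      Disjoint
        ((fun s => X + s) '' {E : Fin n → ℤ | (∀ i, 0 ≤ E i ∧ E i ≤ (ℓ : ℤ)) ∧
          ({i | E i ≠ 0} : Set (Fin n)).ncard ≤ t})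
        ((fun s => Y + s) '' {E : Fin n → ℤ | (∀ i, 0 ≤ E i ∧ E i ≤ (ℓ : ℤ)) ∧
          ({i | E i ≠ 0} : Set (Fin n)).ncard ≤ t}))
    (X : Fin n → ℤ) (hX : X ∈ Λ) (hX0 : X ≠ 0) (hXl : ∀ i, |X i| ≤ (ℓ : ℤ)) :
    t + 1 ≤ ({i | 0 < X i} : Set (Fin n)).ncard ∨
      t + 1 ≤ ({i | X i < 0} : Set (Fin n)).ncard := by
  by_contra h
  push_neg at h
  obtain ⟨h1, h2⟩ := h
  have hp : ({i | 0 < X i} : Set (Fin n)).ncard ≤ t := by omega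
  have hn : ({i | X i < 0} : Set (Fin n)).ncard ≤ t := by omega
  set E1 : Fin n → ℤ := fun i => max (X i) 0 with hE1
  set E2 : Fin n → ℤ := fun i => max (-X i) 0 with hE2
  have hne : (0 : Fin n → ℤ) ≠ X := fun h => hX0 h.symm
  have key := hpack 0 Λ.zero_mem X hX hne
  refine absurd key (Set.not_disjoint_iff.mpr ⟨E1, ⟨E1, ⟨?_, ?_⟩, by simp⟩,
    ⟨E2, ⟨?_, ?_⟩, ?_⟩⟩)
  · intro i
    have := hXl i
    constructor
    · exact le_max_right _ _
    · simp only [hE1]; rw [abs_le] at this; omega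
  · refine le_trans (Set.ncard_le_ncard ?_ (Set.toFinite _)) hp
    intro i hi
    simp only [hE1, Set.mem_setOf_eq] at hi ⊢
    omega
  · intro i
    have := hXl i
    constructor
    · exact le_max_right _ _
    · simp only [hE2]; rw [abs_le] at this; omega
  · refine le_trans (Set.ncard_le_ncard ?_ (Set.toFinite _)) hn
    intro i hi
    simp only [hE2, Set.mem_setOf_eq] at hi ⊢
    omega
  · funext i
    simp only [Pi.add_apply, hE1, hE2]
    omega
end

section
/- Let Λ ⊆ ℤⁿ be a lattice tiling of ℤⁿ with S(n,n−2,ℓ) (a perfect lattice code). If the all-one vector 𝟏 is covered by a codeword X ∈ Λ (i.e., 𝟏 ∈ X + S(n,n−2,ℓ)), then X = 𝟏 − λ·eᵢ for some index i and some integer 0 ≤ λ ≤ ℓ. -/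
/-- In a perfect lattice code `Λ` for `S(n,n−2,ℓ)`, the all-one vector can only be
covered by a codeword of the form `𝟏 − λ·eᵢ` with `0 ≤ λ ≤ ℓ`. -/
theorem perfect_code_cover_allone (n ℓ : ℕ) (hn : 3 ≤ n) (hℓ : 1 ≤ ℓ)
    (Λ : AddSubgroup (Fin n → ℤ))
    (htile : ∀ Z : Fin n → ℤ, ∃! X : Fin n → ℤ, X ∈ Λ ∧
      (∀ i, 0 ≤ Z i - X i ∧ Z i - X i ≤ (ℓ : ℤ)) ∧
      ({i | Z i - X i ≠ 0} : Set (Fin n)).ncard ≤ n - 2)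
    (X : Fin n → ℤ) (hX : X ∈ Λ)
    (hcov : (∀ i, 0 ≤ 1 - X i ∧ 1 - X i ≤ (ℓ : ℤ)) ∧
      ({i | 1 - X i ≠ 0} : Set (Fin n)).ncard ≤ n - 2) :
    ∃ (i : Fin n) (lam : ℤ), 0 ≤ lam ∧ lam ≤ (ℓ : ℤ) ∧
      X = 1 - lam • Pi.single i 1 := by
  classical
  obtain ⟨hbound, hsupp⟩ := hcov
  set s : Finset (Fin n) := Finset.univ.filter (fun i => X i ≠ 1) with hs
  have hset : ({i | 1 - X i ≠ 0} : Set (Fin n)) = ↑s := by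
    ext i
    simp only [Set.mem_setOf_eq, hs, Finset.coe_filter, Finset.mem_univ, true_and,
      Set.mem_setOf_eq, sub_ne_zero]
    exact ⟨fun h => fun h' => h h'.symm, fun h => fun h' => h h'.symm⟩
  have hscard : s.card ≤ n - 2 := by
    rw [hset, Set.ncard_coe_finset] at hsupp; exact hsupp
  by_cases h2 : 2 ≤ s.card
  · exfalso
    set Z : Fin n → ℤ := fun i => if X i = 1 then 1 else 0 with hZ
    obtain ⟨W, -, hWuniq⟩ := htile Z
    have hXcond : X ∈ Λ ∧ (∀ i, 0 ≤ Z i - X i ∧ Z i - X i ≤ (ℓ : ℤ)) ∧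
        ({i | Z i - X i ≠ 0} : Set (Fin n)).ncard ≤ n - 2 := by
      refine ⟨hX, fun i => ?_, ?_⟩
      · by_cases hi : X i = 1
        · simp [hZ, hi]
        · have h1 := (hbound i).1
          have h2' := (hbound i).2
          simp only [hZ, hi, if_neg hi]
          constructor <;> omega
      · have hsub : ({i | Z i - X i ≠ 0} : Set (Fin n)) ⊆ {i | 1 - X i ≠ 0} := by
          intro i hi
          simp only [Set.mem_setOf_eq, hZ] at hi ⊢
          by_cases h : X i = 1
          · simp [h] at hi
          · intro hc; exact h (by omega)
        calc ({i | Z i - X i ≠ 0} : Set (Fin n)).ncard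
            ≤ ({i | 1 - X i ≠ 0} : Set (Fin n)).ncard :=
              Set.ncard_le_ncard hsub (Set.toFinite _)
          _ ≤ n - 2 := hsupp
    have h0cond : (0 : Fin n → ℤ) ∈ Λ ∧ (∀ i, 0 ≤ Z i - (0 : Fin n → ℤ) i ∧ Z i - (0 : Fin n → ℤ) i ≤ (ℓ : ℤ)) ∧
        ({i | Z i - (0 : Fin n → ℤ) i ≠ 0} : Set (Fin n)).ncard ≤ n - 2 := by
      refine ⟨Λ.zero_mem, fun i => ?_, ?_⟩
      · by_cases hi : X i = 1 <;> simp [hZ, hi] <;> exact_mod_cast hℓ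
      · have hcompl : ({i | Z i - (0 : Fin n → ℤ) i ≠ 0} : Set (Fin n)) = ↑(sᶜ) := by
          ext i
          simp only [Set.mem_setOf_eq, Pi.zero_apply, sub_zero, hZ, Finset.coe_compl,
            Set.mem_compl_iff, Finset.mem_coe, hs, Finset.mem_filter, Finset.mem_univ,
            true_and, not_not]
          by_cases h : X i = 1 <;> simp [h]
        rw [hcompl, Set.ncard_coe_finset, Finset.card_compl, Fintype.card_fin]
        omega
    have hX0 : X = 0 := (hWuniq X hXcond).trans (hWuniq 0 h0cond).symm
    have : ({i | 1 - X i ≠ 0} : Set (Fin n)) = Set.univ := by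
      ext i; simp [hX0]
    rw [this, Set.ncard_univ, Nat.card_eq_fintype_card, Fintype.card_fin] at hsupp
    omega
  · push_neg at h2
    interval_cases h : s.card
    · -- s empty : X = 1
      have hse : s = ∅ := Finset.card_eq_zero.mp h
      refine ⟨⟨0, by omega⟩, 0, le_refl _, by exact_mod_cast Nat.zero_le ℓ, ?_⟩
      funext j
      have : X j = 1 := by
        by_contra hj
        have : j ∈ s := by simp [hs, hj]
        simp [hse] at this
      simp [this]
    · obtain ⟨i, hi⟩ := Finset.card_eq_one.mp h
      refine ⟨i, 1 - X i, (hbound i).1, (hbound i).2, ?_⟩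
      funext j
      by_cases hj : j = i
      · subst hj
        simp only [Pi.sub_apply, Pi.one_apply, Pi.smul_apply, Pi.single_eq_same,
          smul_eq_mul, mul_one]
        ring
      · have : X j = 1 := by
          by_contra hc
          have : j ∈ s := by simp [hs, hc]
          rw [hi, Finset.mem_singleton] at this
          exact hj this
        simp [Pi.single_eq_of_ne hj, this]
end

section
/- For all n ≥ 4, the integer 2ⁿ − n − 1 does not divide 2^{n−2}·(2 + λ·(n−3)) for λ = 0 and λ = 1; consequently there is no lattice tiling of ℤⁿ with the sphere S(n,n−2,1). -/
/-!
If `D = 2ⁿ - n - 1` divides `2^(n-2) c`, then, as `2ⁿ ≡ n + 1 (mod D)`, it also divides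
`(n + 1) c`, which is positive and smaller than `D` once `0 < c < n` and `n ≥ 5`.

For the tiling, pass to `G = ℤⁿ ⧸ Λ` and `g i = [eᵢ]`: the tiling says that every element of
`G` is, uniquely, a subset sum `∑_{i ∈ A} g i` with `|A| ≤ n - 2`. Representing `∑ᵢ g i` and every
`∑_{i ≠ j} g i` in this way leaves two possibilities: `∑ᵢ g i = 0` and `2 g j = 0` for all
`j`, or `∑ᵢ g i = g k` and `2 g j = g k` for all `j ≠ k`, where representing `2 g k` also gives
`2 g k = 0`. Either way a pair `{a, b}` has the same sum as a disjoint set of size at most `n - 2`.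
-/

open Finset

theorem mul_succ_lt_two_pow {n : ℕ} (hn : 5 ≤ n) : n * (n + 1) < 2 ^ n := by
  induction n, hn using Nat.le_induction with
  | base => norm_num
  | succ n hn ih => rw [pow_succ]; nlinarith

theorem two_pow_sub_dvd_succ_mul {n c : ℕ} (hn : 2 ≤ n)
    (h : 2 ^ n - n - 1 ∣ 2 ^ (n - 2) * c) : 2 ^ n - n - 1 ∣ (n + 1) * c := by
  have hpow : 2 ^ n = (2 ^ n - n - 1) + (n + 1) := by have := n.lt_two_pow_self; omega
  have h4 : 4 * (2 ^ (n - 2) * c) = (2 ^ n - n - 1) * c + (n + 1) * c := by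
    rw [← mul_assoc, ← add_mul, ← hpow, show 4 = 2 ^ 2 by rfl, ← pow_add,
      Nat.add_sub_cancel' hn]
  exact (Nat.dvd_add_right (dvd_mul_right _ c)).mp (h4 ▸ h.mul_left 4)

theorem two_pow_sub_not_dvd {n c : ℕ} (hn : 5 ≤ n) (hc₀ : 0 < c) (hc : c < n) :
    ¬ 2 ^ n - n - 1 ∣ 2 ^ (n - 2) * c := by
  intro h
  have hlt : (n + 1) * c < 2 ^ n - n - 1 := by
    have hc' : (n + 1) * c ≤ (n + 1) * (n - 1) := Nat.mul_le_mul_left _ (by omega)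
    have hsq : (n + 1) * (n - 1) + (n + 1) = n * (n + 1) := by
      obtain ⟨m, rfl⟩ : ∃ m, n = m + 1 := ⟨n - 1, by omega⟩
      simp only [Nat.add_sub_cancel]; ring
    have := mul_succ_lt_two_pow hn
    omega
  exact hlt.not_ge (Nat.le_of_dvd (by positivity) (two_pow_sub_dvd_succ_mul (by omega) h))

section SubsetSumTiling

variable {G ι : Type*} [AddCommGroup G]

def IsSubsetSumTiling (g : ι → G) (r : ℕ) : Prop :=
  ∀ x : G, ∃! A : Finset ι, #A ≤ r ∧ ∑ i ∈ A, g i = x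

namespace IsSubsetSumTiling

variable {g : ι → G} {r : ℕ} {A B : Finset ι}

theorem eq_of_sum_eq (h : IsSubsetSumTiling g r) (hA : #A ≤ r) (hB : #B ≤ r)
    (hAB : ∑ i ∈ A, g i = ∑ i ∈ B, g i) : A = B :=
  (h _).unique ⟨hA, hAB⟩ ⟨hB, rfl⟩

theorem injective (h : IsSubsetSumTiling g r) (hr : 1 ≤ r) : Function.Injective g :=
  fun a b hab => singleton_injective <| h.eq_of_sum_eq (by simpa) (by simpa) (by simpa)

theorem ne_zero (h : IsSubsetSumTiling g r) (hr : 1 ≤ r) (a : ι) : g a ≠ 0 := fun ha =>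
  singleton_ne_empty a <| h.eq_of_sum_eq (by simpa) (by simp) (by simpa)

theorem eq_of_sum_eq_of_card_sdiff_le [DecidableEq ι] (h : IsSubsetSumTiling g r) (hA : #A ≤ r)
    (hBA : #(B \ A) ≤ r) (hAB : ∑ i ∈ A, g i = ∑ i ∈ B, g i) : A = B := by
  have hsdiff : A \ B = B \ A :=
    h.eq_of_sum_eq ((card_le_card sdiff_subset).trans hA) hBA (sum_sdiff_eq_sum_sdiff_iff.2 hAB)
  ext x
  have := congrArg (x ∈ ·) hsdiff
  simp only [mem_sdiff, eq_iff_iff] at this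
  tauto

variable [Fintype ι] [DecidableEq ι]

theorem card_union_compl_le_one (h : IsSubsetSumTiling g (Fintype.card ι - 2)) {C : Finset ι}
    (hA : #A ≤ Fintype.card ι - 2) (hC : Fintype.card ι - 1 ≤ #C)
    (hAC : ∑ i ∈ A, g i = ∑ i ∈ C, g i) : #(A ∪ Cᶜ) ≤ 1 := by
  by_contra! hlarge
  have hCA : C \ A = (A ∪ Cᶜ)ᶜ := by ext; simp; tauto
  obtain rfl := h.eq_of_sum_eq_of_card_sdiff_le hA (by rw [hCA, card_compl]; omega) hAC
  have := card_le_univ (A ∪ Aᶜ)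
  omega

theorem sum_univ_eq_zero_or_eq (h : IsSubsetSumTiling g (Fintype.card ι - 2)) :
    ∑ i, g i = 0 ∨ ∃ k, ∑ i, g i = g k := by
  obtain ⟨A, hA, hsum⟩ := (h (∑ i, g i)).exists
  have hA1 : #A ≤ 1 := by
    simpa using h.card_union_compl_le_one hA (by simp [card_univ]) hsum
  rcases Nat.le_one_iff_eq_zero_or_eq_one.mp hA1 with hA0 | hA1
  · left; simpa [card_eq_zero.mp hA0] using hsum.symm
  · obtain ⟨k, rfl⟩ := card_eq_one.mp hA1
    exact Or.inr ⟨k, by simpa using hsum.symm⟩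

theorem sum_univ_eq_or_eq_add_self (h : IsSubsetSumTiling g (Fintype.card ι - 2)) (j : ι) :
    ∑ i, g i = g j ∨ ∑ i, g i = g j + g j := by
  have hcompl : ∑ i, g i = ∑ i ∈ {j}ᶜ, g i + g j := by
    rw [← sum_compl_add_sum {j}, sum_singleton]
  obtain ⟨A, hA, hsum⟩ := (h (∑ i ∈ {j}ᶜ, g i)).exists
  have hAj : A ⊆ {j} := by
    have := h.card_union_compl_le_one hA (by simp [card_compl]) hsum
    rw [compl_compl, card_le_one] at this
    exact fun a ha => mem_singleton.2 (this a (mem_union_left _ ha) j (by simp))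
  rw [hcompl, ← hsum]
  rcases subset_singleton_iff.mp hAj with rfl | rfl <;> simp

theorem add_add_add_self_ne_zero (h : IsSubsetSumTiling g (Fintype.card ι - 2))
    (hN : 4 ≤ Fintype.card ι) {T : Finset ι} (hT : ∑ i ∈ T, g i = 0) {a b : ι}
    (ha : a ∈ T) (hb : b ∈ T) (hab : a ≠ b) : g a + g b + (g a + g b) ≠ 0 := by
  intro habab
  have hpair : {a, b} ⊆ T := insert_subset ha (singleton_subset_iff.2 hb)
  have hsum : ∑ i ∈ T \ {a, b}, g i = ∑ i ∈ {a, b}, g i := by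
    have := sum_sdiff hpair (f := g)
    rw [hT, sum_pair hab] at this
    rw [sum_pair hab, eq_neg_of_add_eq_zero_left this, neg_eq_of_add_eq_zero_left habab]
  have hcard : #(T \ {a, b}) ≤ Fintype.card ι - 2 := by
    have hsdiff := card_sdiff_of_subset hpair
    rw [card_pair hab] at hsdiff
    have := card_le_univ T
    omega
  have hmem := mem_insert_self a {b}
  rw [← h.eq_of_sum_eq hcard (by rw [card_pair hab]; omega) hsum] at hmem
  simp at hmem

theorem add_self_eq_zero_of_forall_eq (h : IsSubsetSumTiling g (Fintype.card ι - 2))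
    (hN : 4 ≤ Fintype.card ι) {k : ι} (hk : ∀ j ≠ k, g k = g j + g j) : g k + g k = 0 := by
  obtain ⟨A, hA, hsum⟩ := (h (g k + g k)).exists
  suffices A = ∅ by simpa [this] using hsum.symm
  by_contra! hne
  obtain ⟨x, hx⟩ := hne
  have herase := sum_erase_add A g hx
  have hA' : #(A.erase x) ≤ Fintype.card ι - 2 := (card_le_card (erase_subset x A)).trans hA
  have hmem : x ∈ A.erase x := by
    by_cases hxk : x = k
    · subst hxk
      have hsk : ∑ i ∈ A.erase x, g i = ∑ i ∈ {x}, g i := by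
        rw [sum_singleton]; exact add_right_cancel (herase.trans hsum)
      rw [h.eq_of_sum_eq hA' (by simp; omega) hsk]
      exact mem_singleton_self x
    · have hskx : ∑ i ∈ A.erase x, g i = ∑ i ∈ {k, x}, g i := by
        rw [sum_pair (Ne.symm hxk)]
        refine add_right_cancel (b := g x) (herase.trans ?_)
        rw [hsum, hk x hxk]; abel
      rw [h.eq_of_sum_eq hA' (by rw [card_pair (Ne.symm hxk)]; omega) hskx]
      simp
  simp at hmem

end IsSubsetSumTiling

theorem not_isSubsetSumTiling [Fintype ι] [DecidableEq ι] (hN : 4 ≤ Fintype.card ι)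
    (g : ι → G) : ¬ IsSubsetSumTiling g (Fintype.card ι - 2) := by
  intro h
  have hr : 1 ≤ Fintype.card ι - 2 := by omega
  rcases h.sum_univ_eq_zero_or_eq with h0 | ⟨k, hk⟩
  · have hdouble (j : ι) : g j + g j = 0 :=
      ((h.sum_univ_eq_or_eq_add_self j).resolve_left fun hj => h.ne_zero hr j (hj ▸ h0)) ▸ h0
    obtain ⟨a, b, hab⟩ := Fintype.exists_pair_of_one_lt_card (α := ι) (by omega)
    exact h.add_add_add_self_ne_zero hN h0 (mem_univ a) (mem_univ b) hab
      (by rw [add_add_add_comm, hdouble a, hdouble b, add_zero])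
  · have hdouble (j : ι) (hj : j ≠ k) : g k = g j + g j :=
      hk ▸ (h.sum_univ_eq_or_eq_add_self j).resolve_left
        fun hj' => hj (h.injective hr (hj' ▸ hk))
    have hcompl : ∑ i ∈ {k}ᶜ, g i = 0 := by
      have := sum_compl_add_sum {k} g
      rw [sum_singleton, hk] at this
      exact add_eq_right.mp this
    obtain ⟨a, ha, b, hb, hab⟩ := one_lt_card.mp (show 1 < #({k}ᶜ : Finset ι) by
      rw [card_compl, card_singleton]; omega)
    exact h.add_add_add_self_ne_zero hN hcompl ha hb hab (by
      rw [add_add_add_comm, ← hdouble a (by simpa using ha), ← hdouble b (by simpa using hb),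
        h.add_self_eq_zero_of_forall_eq hN hdouble])

end SubsetSumTiling

section Lattice

variable {ι : Type*} [DecidableEq ι] {r : ℕ}

theorem sum_single_one_injective :
    Function.Injective fun A : Finset ι => ∑ i ∈ A, Pi.single i (1 : ℤ) := fun A B hAB => by
  ext j
  have := congrFun hAB j
  simp only [Finset.sum_apply, sum_pi_single] at this
  split_ifs at this <;> simp_all

theorem exists_sum_single_one_eq_iff [Fintype ι] (w : ι → ℤ) :
    (∃ A : Finset ι, #A ≤ r ∧ ∑ i ∈ A, Pi.single i 1 = w) ↔
      (∀ i, 0 ≤ w i ∧ w i ≤ 1) ∧ {i | w i ≠ 0}.ncard ≤ r := by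
  constructor
  · rintro ⟨A, hA, rfl⟩
    simp only [Finset.sum_apply, sum_pi_single]
    refine ⟨fun i => by split_ifs <;> simp, ?_⟩
    simpa [← Set.ncard_coe_finset] using hA
  · rintro ⟨hw, hcard⟩
    refine ⟨({i | w i ≠ 0} : Finset ι), by simpa [← Set.ncard_coe_finset] using hcard, ?_⟩
    ext j
    have := hw j
    simp only [Finset.sum_apply, sum_pi_single, mem_filter, mem_univ, true_and]
    split_ifs <;> omega

theorem isSubsetSumTiling_of_forall_existsUnique [Fintype ι] (Λ : AddSubgroup (ι → ℤ))
    (hΛ : ∀ Z : ι → ℤ, ∃! X : ι → ℤ, X ∈ Λ ∧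
      (∀ i, 0 ≤ Z i - X i ∧ Z i - X i ≤ (1 : ℤ)) ∧
        ({i | Z i - X i ≠ 0} : Set ι).ncard ≤ r) :
    IsSubsetSumTiling (fun i => ((Pi.single i 1 : ι → ℤ) : (ι → ℤ) ⧸ Λ)) r := by
  simp only [← exists_sum_single_one_eq_iff (fun i => _ - _), ← Pi.sub_def] at hΛ
  intro x
  obtain ⟨Z, rfl⟩ := QuotientAddGroup.mk_surjective x
  obtain ⟨X, ⟨hX, A, hA, hAZ⟩, hX_unique⟩ := hΛ Z
  have hmk (B : Finset ι) : ∑ i ∈ B, ((Pi.single i 1 : ι → ℤ) : (ι → ℤ) ⧸ Λ) =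
      ↑(∑ i ∈ B, Pi.single i (1 : ℤ)) := (QuotientAddGroup.mk_sum Λ B).symm
  refine ⟨A, ⟨hA, ?_⟩, fun B ⟨hB, hBZ⟩ => sum_single_one_injective ?_⟩
  · rwa [hmk, hAZ, QuotientAddGroup.eq, neg_sub, sub_add_cancel]
  · rw [hmk, QuotientAddGroup.eq, neg_add_eq_sub] at hBZ
    show ∑ i ∈ B, _ = ∑ i ∈ A, _
    rw [hAZ, ← hX_unique _ ⟨hBZ, B, hB, (sub_sub_cancel _ _).symm⟩, sub_sub_cancel]

end Lattice

/-- For `n ≥ 4`, `2ⁿ − n − 1` divides neither `2^{n−2}·(2 + λ(n−3))` for `λ = 0`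
nor for `λ = 1`; consequently there is no lattice tiling of `ℤⁿ` with the sphere
`S(n,n−2,1)`. -/
theorem no_perfect_code_ell_one (n : ℕ) (hn : 4 ≤ n) :
    (¬ (2 ^ n - n - 1 ∣ 2 ^ (n - 2) * (2 + 0 * (n - 3)))) ∧
    (¬ (2 ^ n - n - 1 ∣ 2 ^ (n - 2) * (2 + 1 * (n - 3)))) ∧
    ¬ ∃ Λ : AddSubgroup (Fin n → ℤ),
        ∀ Z : Fin n → ℤ, ∃! X : Fin n → ℤ, X ∈ Λ ∧
          (∀ i, 0 ≤ Z i - X i ∧ Z i - X i ≤ (1 : ℤ)) ∧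
          ({i | Z i - X i ≠ 0} : Set (Fin n)).ncard ≤ n - 2 := by
  refine ⟨?_, ?_, ?_⟩
  · rcases hn.eq_or_lt with rfl | hn
    · decide
    · simpa using two_pow_sub_not_dvd hn two_pos (by omega)
  · rcases hn.eq_or_lt with rfl | hn
    · decide
    · rw [one_mul, show 2 + (n - 3) = n - 1 by omega]
      exact two_pow_sub_not_dvd hn (by omega) (by omega)
  · rintro ⟨Λ, hΛ⟩
    have h := isSubsetSumTiling_of_forall_existsUnique Λ hΛ
    exact not_isSubsetSumTiling (ι := Fin n) (by simpa using hn) _ (by simpa using h)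
end
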